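/- arXiv:2402.00435 — 9 statements merged into one kernel-verified Lean document; each statement's English description precedes it below -/
import Mathlib

section
/- Let s ≥ 1 and 0 ≤ j ≤ s−1 be integers and let p be an (s,j)-Hermite polynomial. Then p(x) ≥ 0 for all x ∈ [0,1]. -/
/-- A real polynomial `p` is an `(s,j)`-Hermite polynomial if `deg p ≤ 2s-1` and, for
every `0 ≤ k ≤ s-1`, `p⁽ᵏ⁾(0) = δ_{j,k}` and `p⁽ᵏ⁾(1) = 0`. -/
def IsHermitePoly (s j : ℕ) (p : Polynomial ℝ) : Prop :=
  p.natDegree ≤ 2 * s - 1 ∧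
    ∀ k < s, (Polynomial.derivative^[k] p).eval 0 = (if j = k then (1 : ℝ) else 0) ∧
      (Polynomial.derivative^[k] p).eval 1 = 0

/-- A real polynomial `q` is an `(s,j)`-dual Hermite polynomial if `deg q ≤ 2s-1` and, for
every `0 ≤ k ≤ s-1`, `q⁽ᵏ⁾(0) = 0` and `q⁽ᵏ⁾(1) = δ_{j,k}`. -/
def IsDualHermitePoly (s j : ℕ) (q : Polynomial ℝ) : Prop :=
  q.natDegree ≤ 2 * s - 1 ∧
    ∀ k < s, (Polynomial.derivative^[k] q).eval 0 = 0 ∧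
      (Polynomial.derivative^[k] q).eval 1 = (if j = k then (1 : ℝ) else 0)

/-!
Write `p = (1 - X)^s * r`, which is possible because `p` vanishes to order `s` at `1`; then
`deg r < s`. Every Taylor coefficient of `p` at `0` of order `< s` is `δ_{jk} / k! ≥ 0`, and
dividing by `1 - X` amounts to taking partial sums of coefficients, so the coefficients of `r`
below `s` — hence all of them — are nonnegative. Thus `p x = (1 - x)^s * r x ≥ 0` on `[0,1]`.
-/

open Polynomial

namespace Polynomial

theorem iterate_derivative_eval_zero {R : Type*} [Semiring R] (p : R[X]) (k : ℕ) :
    (derivative^[k] p).eval 0 = k.factorial * p.coeff k := by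
  rw [← coeff_zero_eq_eval_zero, coeff_iterate_derivative, zero_add, Nat.descFactorial_self,
    nsmul_eq_mul]

theorem X_sub_C_pow_dvd_of_iterate_derivative_eval_eq_zero {R : Type*} [CommRing R] [IsDomain R]
    [CharZero R] {p : R[X]} {t : R} {n : ℕ} (h : ∀ k < n, (derivative^[k] p).eval t = 0) :
    (X - C t) ^ n ∣ p := by
  rcases eq_or_ne p 0 with rfl | hp
  · exact dvd_zero _
  rcases Nat.eq_zero_or_pos n with rfl | hn
  · simp
  have := lt_rootMultiplicity_of_isRoot_iterate_derivative (n := n - 1) hp fun k hk => h k (by omega)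
  exact (le_rootMultiplicity_iff hp).1 (by omega)

theorem exists_eq_one_sub_X_pow_mul_of_iterate_derivative_eval_one {R : Type*} [CommRing R]
    [IsDomain R] [CharZero R] {p : R[X]} {n : ℕ}
    (h : ∀ k < n, (derivative^[k] p).eval 1 = 0) :
    ∃ r : R[X], p = (1 - X) ^ n * r ∧ r.natDegree = p.natDegree - n := by
  obtain ⟨q, rfl⟩ := X_sub_C_pow_dvd_of_iterate_derivative_eval_eq_zero h
  have hunit : IsUnit ((-1 : R) ^ n) := (isUnit_one.neg).pow n
  refine ⟨C ((-1) ^ n) * q, ?_, ?_⟩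
  · rw [← mul_assoc, C_pow, C_neg, C_1, ← mul_pow]
    ring
  · rcases eq_or_ne q 0 with rfl | hq
    · simp
    rw [natDegree_C_mul_of_isUnit hunit, ((monic_X_sub_C 1).pow n).natDegree_mul' hq,
      natDegree_pow, natDegree_X_sub_C]
    omega

section OrderedRing

variable {R : Type*} [CommRing R] [PartialOrder R] [IsOrderedRing R]

theorem coeff_nonneg_of_one_sub_X_mul {u : R[X]} {m : ℕ}
    (h : ∀ i < m, 0 ≤ ((1 - X) * u).coeff i) : ∀ i < m, 0 ≤ u.coeff i := by
  intro i hi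
  induction i with
  | zero => simpa using h 0 hi
  | succ i ih =>
    have hsucc : u.coeff (i + 1) = ((1 - X) * u).coeff (i + 1) + u.coeff i := by
      simp [sub_mul, coeff_X_mul]
    rw [hsucc]
    exact add_nonneg (h _ hi) (ih (by omega))

theorem coeff_nonneg_of_one_sub_X_pow_mul {r : R[X]} {m : ℕ} (n : ℕ)
    (h : ∀ i < m, 0 ≤ ((1 - X) ^ n * r).coeff i) : ∀ i < m, 0 ≤ r.coeff i := by
  induction n with
  | zero => simpa using h
  | succ n ih => exact ih (coeff_nonneg_of_one_sub_X_mul (by rwa [pow_succ', mul_assoc] at h))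

theorem eval_nonneg_of_coeff_nonneg {p : R[X]} (h : ∀ n, 0 ≤ p.coeff n) {x : R} (hx : 0 ≤ x) :
    0 ≤ p.eval x := by
  rw [eval_eq_sum_range]
  exact Finset.sum_nonneg fun i _ => mul_nonneg (h i) (pow_nonneg hx i)

end OrderedRing

end Polynomial

theorem hermitePoly_nonneg_on_unit_interval_general (s j : ℕ) (hs : 1 ≤ s)
    (p : Polynomial ℝ) (hp : IsHermitePoly s j p) :
    ∀ x ∈ Set.Icc (0:ℝ) 1, 0 ≤ p.eval x := by
  obtain ⟨hdeg, hcond⟩ := hp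
  have hp_coeff : ∀ k < s, 0 ≤ p.coeff k := by
    intro k hk
    have hk0 := (hcond k hk).1
    rw [iterate_derivative_eval_zero] at hk0
    refine nonneg_of_mul_nonneg_right ?_ (Nat.cast_pos.2 k.factorial_pos)
    rw [hk0]
    split_ifs <;> norm_num
  obtain ⟨r, rfl, hr_deg⟩ :=
    exists_eq_one_sub_X_pow_mul_of_iterate_derivative_eval_one fun k hk => (hcond k hk).2
  have hr_coeff : ∀ n, 0 ≤ r.coeff n := by
    intro n
    rcases lt_or_ge n s with hn | hn
    · exact coeff_nonneg_of_one_sub_X_pow_mul s hp_coeff n hn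
    · rw [coeff_eq_zero_of_natDegree_lt (by omega)]
  rintro x ⟨hx0, hx1⟩
  rw [eval_mul, eval_pow, eval_sub, eval_one, eval_X]
  exact mul_nonneg (pow_nonneg (sub_nonneg.2 hx1) s) (eval_nonneg_of_coeff_nonneg hr_coeff hx0)

/-- an `(s,j)`-Hermite polynomial is nonnegative on `[0,1]`. -/
theorem hermitePoly_nonneg_on_unit_interval (s j : ℕ) (hs : 1 ≤ s) (hj : j ≤ s - 1)
    (p : Polynomial ℝ) (hp : IsHermitePoly s j p) :
    ∀ x ∈ Set.Icc (0:ℝ) 1, 0 ≤ p.eval x :=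
  hermitePoly_nonneg_on_unit_interval_general s j hs p hp
end

section
/- Let s ≥ 1 be an integer and let p be an (s,0)-Hermite polynomial. Then p is monotone nonincreasing on [0,1], and 0 ≤ p(x) ≤ 1 for all x ∈ [0,1]. -/
open Polynomial

/-- the `(s,0)`-Hermite polynomial is nonincreasing on `[0,1]` and takes
values in `[0,1]` there. -/
theorem hermitePoly_zero_antitone_and_bounds (s : ℕ) (hs : 1 ≤ s)
    (p : Polynomial ℝ) (hp : IsHermitePoly s 0 p) :
    AntitoneOn (fun x : ℝ => p.eval x) (Set.Icc (0:ℝ) 1) ∧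
      ∀ x ∈ Set.Icc (0:ℝ) 1, 0 ≤ p.eval x ∧ p.eval x ≤ 1 := by
  obtain ⟨hdeg, hvals⟩ := hp
  have hp0 : p.eval 0 = 1 := by simpa using (hvals 0 hs).1
  have hp1 : p.eval 1 = 0 := by simpa using (hvals 0 hs).2
  set q := derivative p with hq
  have hqne : q ≠ 0 := by
    intro h
    have h0 : p.natDegree = 0 := natDegree_eq_zero_of_derivative_eq_zero h
    obtain ⟨c, rfl⟩ := natDegree_eq_zero.mp h0
    simp at hp0 hp1
    rw [hp0] at hp1
    norm_num at hp1
  -- divisibility at roots 0 and 1 with multiplicity s-1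
  have hdvd : ∀ t : ℝ, t = 0 ∨ t = 1 → (X - C t) ^ (s - 1) ∣ q := by
    intro t ht
    rcases Nat.eq_or_lt_of_le hs with h1 | h2
    · simp [← h1]
    · have hlt : s - 2 < q.rootMultiplicity t := by
        apply lt_rootMultiplicity_of_isRoot_iterate_derivative_of_mem_nonZeroDivisors hqne
        · intro m hm
          have hder : derivative^[m] q = derivative^[m + 1] p := by
            rw [hq, ← Function.iterate_succ_apply]
          have hms : m + 1 < s := by omega
          rcases ht with rfl | rfl
          · have := (hvals (m + 1) hms).1
            simp only [IsRoot, hder]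
            simpa using this
          · have := (hvals (m + 1) hms).2
            simp only [IsRoot, hder]
            simpa using this
        · exact mem_nonZeroDivisors_of_ne_zero (by positivity)
      calc (X - C t) ^ (s - 1) ∣ (X - C t) ^ q.rootMultiplicity t :=
            pow_dvd_pow _ (by omega)
        _ ∣ q := pow_rootMultiplicity_dvd q t
  have hcop : IsCoprime ((X - C (0:ℝ)) ^ (s - 1)) ((X - C (1:ℝ)) ^ (s - 1)) :=
    (isCoprime_X_sub_C_of_isUnit_sub (by norm_num)).pow
  have hdvd2 : (X - C (0:ℝ)) ^ (s - 1) * (X - C (1:ℝ)) ^ (s - 1) ∣ q :=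
    hcop.mul_dvd (hdvd 0 (Or.inl rfl)) (hdvd 1 (Or.inr rfl))
  obtain ⟨r, hr⟩ := hdvd2
  have hrne : r ≠ 0 := by rintro rfl; simp at hr; exact hqne hr
  have hDne : ((X - C (0:ℝ)) ^ (s - 1) * (X - C (1:ℝ)) ^ (s - 1)) ≠ 0 := by
    apply mul_ne_zero <;> exact pow_ne_zero _ (X_sub_C_ne_zero _)
  have hqdeg : q.natDegree ≤ 2 * (s - 1) := by
    have h1 : q.natDegree ≤ p.natDegree - 1 := natDegree_derivative_le p
    omega
  have hDdeg : ((X - C (0:ℝ)) ^ (s - 1) * (X - C (1:ℝ)) ^ (s - 1)).natDegree = 2 * (s - 1) := by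
    rw [natDegree_mul (pow_ne_zero _ (X_sub_C_ne_zero _)) (pow_ne_zero _ (X_sub_C_ne_zero _)),
      natDegree_pow, natDegree_pow, natDegree_X_sub_C, natDegree_X_sub_C]
    ring
  have hrdeg : r.natDegree = 0 := by
    have := natDegree_mul hDne hrne
    rw [← hr, hDdeg] at this
    omega
  obtain ⟨c, rfl⟩ := natDegree_eq_zero.mp hrdeg
  -- evaluation formula
  have heval : ∀ x : ℝ, q.eval x = x ^ (s - 1) * (x - 1) ^ (s - 1) * c := by
    intro x; rw [hr]; simp
  -- rewrite with (1-x)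
  set d := (-1 : ℝ) ^ (s - 1) * c with hd
  have heval' : ∀ x : ℝ, q.eval x = d * (x ^ (s - 1) * (1 - x) ^ (s - 1)) := by
    intro x
    rw [heval x, hd]
    have : (x - 1) ^ (s - 1) = (-1 : ℝ) ^ (s - 1) * (1 - x) ^ (s - 1) := by
      rw [← neg_sub, neg_pow]
    rw [this]; ring
  have hderiv : ∀ x : ℝ, deriv (fun y : ℝ => p.eval y) x = q.eval x := by
    intro x; exact Polynomial.deriv p
  have hcont : ContinuousOn (fun x : ℝ => p.eval x) (Set.Icc (0:ℝ) 1) :=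
    (Polynomial.continuous p).continuousOn
  have hdiff : DifferentiableOn ℝ (fun x : ℝ => p.eval x) (interior (Set.Icc (0:ℝ) 1)) :=
    (Polynomial.differentiable p).differentiableOn
  have hfac : ∀ x ∈ Set.Icc (0:ℝ) 1, 0 ≤ x ^ (s - 1) * (1 - x) ^ (s - 1) := by
    intro x hx
    obtain ⟨h0, h1⟩ := hx
    have h2 : (0:ℝ) ≤ 1 - x := by linarith
    positivity
  rcases le_or_gt d 0 with hdle | hdpos
  · have hanti : AntitoneOn (fun x : ℝ => p.eval x) (Set.Icc (0:ℝ) 1) := by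
      apply antitoneOn_of_deriv_nonpos (convex_Icc 0 1) hcont hdiff
      intro x hx
      rw [hderiv, heval']
      have hx' : x ∈ Set.Icc (0:ℝ) 1 := interior_subset hx
      exact mul_nonpos_of_nonpos_of_nonneg hdle (hfac x hx')
    refine ⟨hanti, fun x hx => ?_⟩
    constructor
    · rw [← hp1]
      exact hanti hx (by norm_num) hx.2
    · rw [← hp0]
      exact hanti (by norm_num) hx hx.1
  · exfalso
    have hmono : MonotoneOn (fun x : ℝ => p.eval x) (Set.Icc (0:ℝ) 1) := by
      apply monotoneOn_of_deriv_nonneg (convex_Icc 0 1) hcont hdiff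
      intro x hx
      rw [hderiv, heval']
      have hx' : x ∈ Set.Icc (0:ℝ) 1 := interior_subset hx
      exact mul_nonneg hdpos.le (hfac x hx')
    have := hmono (Set.left_mem_Icc.mpr one_pos.le) (Set.right_mem_Icc.mpr one_pos.le) one_pos.le
    simp only [hp0, hp1] at this
    linarith
end

section
/- Let s ≥ 1 be an integer and let p be an (s,0)-Hermite polynomial. Then ∫₀¹ p(x)² dx ≤ 1/2, i.e., the L²(0,1) norm of p is at most √(1/2). -/
open MeasureTheory Polynomial

noncomputable def hermiteAux (s : ℕ) : ℝ[X] :=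
  ∑ i ∈ Finset.range s, C ((s - 1 + i).choose (s - 1) : ℝ) * X ^ i

lemma hermiteAux_coeff (s d : ℕ) (hd : d < s) :
    (hermiteAux s).coeff d = ((s - 1 + d).choose (s - 1) : ℝ) := by
  simp [hermiteAux, Polynomial.coeff_X_pow, Finset.sum_ite_eq' (Finset.range s), hd,
    Finset.mem_range]

lemma hermiteAux_natDegree (s : ℕ) : (hermiteAux s).natDegree ≤ s - 1 := by
  apply Polynomial.natDegree_sum_le_of_forall_le
  intro i hi
  exact le_trans (Polynomial.natDegree_C_mul_X_pow_le _ _) (by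
    simp only [Finset.mem_range] at hi; omega)

lemma hermiteAux_eval_nonneg (s : ℕ) {x : ℝ} (hx : 0 ≤ x) : 0 ≤ (hermiteAux s).eval x := by
  rw [hermiteAux, Polynomial.eval_finset_sum]
  apply Finset.sum_nonneg
  intro i _
  simp only [Polynomial.eval_mul, Polynomial.eval_C, Polynomial.eval_pow, Polynomial.eval_X]
  positivity

lemma key1 (s : ℕ) (hs : 1 ≤ s) :
    (X : ℝ[X]) ^ s ∣ (1 - X) ^ s * hermiteAux s - 1 := by
  have hps : (PowerSeries.X : PowerSeries ℝ) ^ s ∣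
      (((1 - X) ^ s * hermiteAux s - 1 : ℝ[X]) : PowerSeries ℝ) := by
    have hfac : (((1 - X) ^ s * hermiteAux s - 1 : ℝ[X]) : PowerSeries ℝ)
        = (PowerSeries.invOneSubPow ℝ s).inv *
          ((hermiteAux s : PowerSeries ℝ) - (PowerSeries.invOneSubPow ℝ s).val) := by
      have h1 : ((1 - PowerSeries.X : PowerSeries ℝ)) ^ s *
          ((PowerSeries.invOneSubPow ℝ s) : PowerSeries ℝ) = 1 := by
        rw [← PowerSeries.invOneSubPow_inv_eq_one_sub_pow]
        exact (PowerSeries.invOneSubPow ℝ s).inv_val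
      rw [mul_sub, PowerSeries.invOneSubPow_inv_eq_one_sub_pow, h1]
      push_cast
      ring
    rw [hfac]
    apply Dvd.dvd.mul_left
    rw [PowerSeries.X_pow_dvd_iff]
    intro m hm
    rw [map_sub, Polynomial.coeff_coe, hermiteAux_coeff s m hm,
      PowerSeries.invOneSubPow_val_eq_mk_sub_one_add_choose_of_pos ℝ s hs,
      PowerSeries.coeff_mk]
    simp
  rw [Polynomial.X_pow_dvd_iff]
  intro d hd
  rw [← Polynomial.coeff_coe]
  exact (PowerSeries.X_pow_dvd_iff.mp hps) d hd

lemma pow_sub_dvd_of_derivs (s : ℕ) (f : ℝ[X]) (a : ℝ) (hf : f ≠ 0)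
    (h : ∀ k < s, (Polynomial.derivative^[k] f).eval a = 0) : (X - C a) ^ s ∣ f := by
  rcases Nat.eq_zero_or_pos s with h0 | h0
  · simp [h0]
  have hlt : s - 1 < f.rootMultiplicity a := by
    apply Polynomial.lt_rootMultiplicity_of_isRoot_iterate_derivative_of_mem_nonZeroDivisors hf
    · intro m hm; exact h m (by omega)
    · exact mem_nonZeroDivisors_of_ne_zero (by
        exact_mod_cast Nat.cast_ne_zero.mpr (Nat.factorial_ne_zero _))
  calc (X - C a) ^ s ∣ (X - C a) ^ (f.rootMultiplicity a) := pow_dvd_pow _ (by omega)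
    _ ∣ f := f.pow_rootMultiplicity_dvd a

lemma dvd_comp {a b r : ℝ[X]} (h : a ∣ b) : a.comp r ∣ b.comp r := by
  obtain ⟨c, rfl⟩ := h; exact ⟨c.comp r, by rw [Polynomial.mul_comp]⟩


lemma deg20 (s : ℕ) : ((X : ℝ[X]) ^ s * (X - C 1) ^ s).natDegree = 2 * s := by
  rw [Polynomial.natDegree_mul (pow_ne_zero _ Polynomial.X_ne_zero)
    (pow_ne_zero _ (Polynomial.X_sub_C_ne_zero 1)),
    Polynomial.natDegree_pow, Polynomial.natDegree_pow, Polynomial.natDegree_X,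
    Polynomial.natDegree_X_sub_C]
  ring

lemma degOneSub : (1 - X : ℝ[X]).natDegree = 1 := by
  have : (1 - X : ℝ[X]) = -(X - C 1) := by rw [Polynomial.C_1]; ring
  rw [this, Polynomial.natDegree_neg, Polynomial.natDegree_X_sub_C]

lemma cop (s : ℕ) : IsCoprime ((X : ℝ[X]) ^ s) ((X - C 1) ^ s) :=
  IsCoprime.pow (⟨1, -1, by rw [Polynomial.C_1]; ring⟩ : IsCoprime (X : ℝ[X]) (X - C 1))


/-- the squared `L²(0,1)` norm of the `(s,0)`-Hermite polynomial is at
most `1/2`. -/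
theorem hermitePoly_zero_l2_bound (s : ℕ) (hs : 1 ≤ s)
    (p : Polynomial ℝ) (hp : IsHermitePoly s 0 p) :
    (∫ x in (0:ℝ)..1, (p.eval x) ^ 2) ≤ 1 / 2 := by
  obtain ⟨hdeg, hcond⟩ := hp
  have hs0 : 0 < s := hs
  have hp0 : p.eval 0 = 1 := by simpa using (hcond 0 hs0).1
  have hpe1 : p.eval 1 = 0 := by simpa using (hcond 0 hs0).2
  have hpne : p ≠ 0 := fun h => by simp [h] at hp0
  have h1 : (X - C (1 : ℝ)) ^ s ∣ p :=
    pow_sub_dvd_of_derivs s p 1 hpne (fun k hk => (hcond k hk).2)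
  have hpm1ne : p - 1 ≠ 0 := by
    intro h
    rw [sub_eq_zero] at h
    rw [h] at hpe1
    norm_num at hpe1
  have h2 : (X : ℝ[X]) ^ s ∣ (p - 1) := by
    have := pow_sub_dvd_of_derivs s (p - 1) 0 hpm1ne ?_
    · simpa using this
    intro k hk
    match k with
    | 0 => simp [hp0]
    | (n+1) =>
      have hd : Polynomial.derivative^[n+1] (p - 1 : ℝ[X]) = Polynomial.derivative^[n+1] p := by
        rw [Function.iterate_succ_apply, Function.iterate_succ_apply]
        congr 1
        rw [Polynomial.derivative_sub, Polynomial.derivative_one, sub_zero]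
      rw [hd]
      have := (hcond (n+1) hk).1
      simpa using this
  set q : ℝ[X] := (1 - X) ^ s * hermiteAux s with hqdef
  have hq : (X : ℝ[X]) ^ s ∣ q - 1 := key1 s hs
  have hqdeg : q.natDegree ≤ 2 * s - 1 := by
    calc q.natDegree ≤ ((1 - X : ℝ[X]) ^ s).natDegree + (hermiteAux s).natDegree :=
          Polynomial.natDegree_mul_le
      _ ≤ s + (s - 1) := by
          rw [Polynomial.natDegree_pow, degOneSub]
          exact add_le_add (by omega) (hermiteAux_natDegree s)
      _ ≤ 2 * s - 1 := by omega
  have hXCq : (X - C (1:ℝ)) ^ s ∣ q := by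
    apply dvd_mul_of_dvd_left
    exact ⟨(-1 : ℝ[X]) ^ s,
      by rw [Polynomial.C_1, show ((1 : ℝ[X]) - X) = (X - 1) * (-1) from by ring, mul_pow]⟩
  -- p = q
  have hpq : p = q := by
    rw [← sub_eq_zero]
    by_contra hne
    have hdvd : (X : ℝ[X]) ^ s * (X - C 1) ^ s ∣ p - q :=
      (cop s).mul_dvd (by simpa using dvd_sub h2 hq) (dvd_sub h1 hXCq)
    have hle := Polynomial.natDegree_le_of_dvd hdvd hne
    rw [deg20] at hle
    have : (p - q).natDegree ≤ 2 * s - 1 :=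
      le_trans (Polynomial.natDegree_sub_le _ _) (max_le hdeg hqdeg)
    omega
  -- symmetry polynomial
  set D : ℝ[X] := (X ^ s * (hermiteAux s).comp (1 - X) - 1) + q with hDdef
  have hD1 : (X : ℝ[X]) ^ s ∣ D := by
    have : D = X ^ s * (hermiteAux s).comp (1 - X) + (q - 1) := by ring
    rw [this]
    exact dvd_add (dvd_mul_right _ _) hq
  have hD2 : (X - C (1:ℝ)) ^ s ∣ D := by
    have hcomp := dvd_comp (r := 1 - X) (key1 s hs)
    simp only [Polynomial.pow_comp, Polynomial.X_comp, Polynomial.sub_comp,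
      Polynomial.mul_comp, Polynomial.one_comp] at hcomp
    rw [sub_sub_cancel] at hcomp
    have hfac : (X - C (1:ℝ)) ^ s ∣ (1 - X : ℝ[X]) ^ s :=
      ⟨(-1 : ℝ[X]) ^ s,
        by rw [Polynomial.C_1, show ((1 : ℝ[X]) - X) = (X - 1) * (-1) from by ring, mul_pow]⟩
    exact dvd_add (hfac.trans hcomp) hXCq
  have hDdeg : D.natDegree ≤ 2 * s - 1 := by
    have hc : ((hermiteAux s).comp (1 - X)).natDegree ≤ s - 1 := by
      rw [Polynomial.natDegree_comp, degOneSub, mul_one]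
      exact hermiteAux_natDegree s
    have h11 : ((X : ℝ[X]) ^ s * (hermiteAux s).comp (1 - X)).natDegree ≤ 2 * s - 1 := by
      calc _ ≤ ((X : ℝ[X]) ^ s).natDegree + ((hermiteAux s).comp (1 - X)).natDegree :=
            Polynomial.natDegree_mul_le
        _ ≤ s + (s - 1) := by
            rw [Polynomial.natDegree_pow, Polynomial.natDegree_X, mul_one]
            exact add_le_add le_rfl hc
        _ ≤ 2 * s - 1 := by omega
    calc D.natDegree ≤ max ((X ^ s * (hermiteAux s).comp (1 - X) - 1 : ℝ[X])).natDegree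
          q.natDegree := Polynomial.natDegree_add_le _ _
      _ ≤ 2 * s - 1 := by
          apply max_le _ hqdeg
          refine le_trans (Polynomial.natDegree_sub_le _ _) (max_le h11 (by simp))
  have hD0 : D = 0 := by
    by_contra hne
    have hdvd : (X : ℝ[X]) ^ s * (X - C 1) ^ s ∣ D := (cop s).mul_dvd hD1 hD2
    have hle := Polynomial.natDegree_le_of_dvd hdvd hne
    rw [deg20] at hle
    omega
  -- pointwise facts
  have keyev : ∀ x : ℝ, x ^ s * (hermiteAux s).eval (1 - x) - 1 + p.eval x = 0 := by
    intro x
    have := congrArg (Polynomial.eval x) hD0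
    simpa [hDdef, hpq, Polynomial.eval_comp] using this
  have hqev : ∀ x : ℝ, p.eval x = (1 - x) ^ s * (hermiteAux s).eval x := by
    intro x
    rw [hpq]
    simp [hqdef]
  have hub : ∀ x ∈ Set.Icc (0:ℝ) 1, p.eval x ≤ 1 := by
    intro x hx
    have h := keyev x
    have : 0 ≤ x ^ s * (hermiteAux s).eval (1 - x) := by
      exact mul_nonneg (pow_nonneg hx.1 s) (hermiteAux_eval_nonneg s (by linarith [hx.2]))
    linarith
  have hlb : ∀ x ∈ Set.Icc (0:ℝ) 1, 0 ≤ p.eval x := by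
    intro x hx
    rw [hqev x]
    exact mul_nonneg (pow_nonneg (by linarith [hx.2]) s) (hermiteAux_eval_nonneg s hx.1)
  have hsym : ∀ x : ℝ, p.eval x + p.eval (1 - x) = 1 := by
    intro x
    have h1 := keyev x
    have h2 := hqev (1 - x)
    have : p.eval (1 - x) = x ^ s * (hermiteAux s).eval (1 - x) := by
      rw [h2]; ring_nf
    linarith
  -- integrals
  have hc : Continuous fun x : ℝ => p.eval x := p.continuous
  have hint : IntervalIntegrable (fun x : ℝ => p.eval x) volume 0 1 :=
    hc.intervalIntegrable 0 1
  have hintc : IntervalIntegrable (fun x : ℝ => p.eval (1 - x)) volume 0 1 :=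
    (hc.comp (continuous_const.sub continuous_id)).intervalIntegrable 0 1
  have hint2 : IntervalIntegrable (fun x : ℝ => p.eval x ^ 2) volume 0 1 :=
    (hc.pow 2).intervalIntegrable 0 1
  have hI : (∫ x in (0:ℝ)..1, p.eval x) = 1 / 2 := by
    have hsub : (∫ x in (0:ℝ)..1, p.eval (1 - x)) = ∫ x in (0:ℝ)..1, p.eval x := by
      have h := intervalIntegral.integral_comp_sub_left (a := (0:ℝ)) (b := 1)
        (fun x : ℝ => p.eval x) 1
      norm_num at h
      exact h
    have hadd : (∫ x in (0:ℝ)..1, (p.eval x + p.eval (1 - x))) =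
        (∫ x in (0:ℝ)..1, p.eval x) + ∫ x in (0:ℝ)..1, p.eval (1 - x) :=
      intervalIntegral.integral_add hint hintc
    have hone : (∫ x in (0:ℝ)..1, (p.eval x + p.eval (1 - x))) = 1 := by
      have : (fun x : ℝ => p.eval x + p.eval (1 - x)) = fun _ => (1:ℝ) := funext hsym
      rw [this]
      simp
    rw [hadd, hsub] at hone
    linarith
  have hmono : (∫ x in (0:ℝ)..1, p.eval x ^ 2) ≤ ∫ x in (0:ℝ)..1, p.eval x := by
    apply intervalIntegral.integral_mono_on (by norm_num) hint2 hint
    intro x hx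
    nlinarith [hlb x hx, hub x hx]
  linarith
end

section
/- Let s ≥ 2 and 1 ≤ j ≤ s−1 be integers. Let p be an (s,j)-Hermite polynomial, P an (s,0)-Hermite polynomial, and r an (s−1, j−1)-Hermite polynomial. Then for all x ∈ ℝ, p(x) = ∫₀ˣ r(y) dy + (P(x) − 1) · ∫₀¹ r(y) dy. -/
open MeasureTheory


open Polynomial

noncomputable def antider (r : ℝ[X]) : ℝ[X] := r.sum fun n a => C (a / (n + 1)) * X ^ (n + 1)

lemma derivative_antider (r : ℝ[X]) : derivative (antider r) = r := by
  rw [antider, Polynomial.sum, map_sum]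
  conv_rhs => rw [r.as_sum_support]
  refine Finset.sum_congr rfl fun n _ => ?_
  rw [derivative_C_mul, derivative_X_pow, Nat.add_sub_cancel, ← mul_assoc, ← C_mul,
    C_mul_X_pow_eq_monomial]
  congr 1
  push_cast
  rw [div_mul_cancel₀ _ (by positivity : (n:ℝ) + 1 ≠ 0)]

lemma antider_eval_zero (r : ℝ[X]) : (antider r).eval 0 = 0 := by
  rw [antider, Polynomial.sum, Polynomial.eval_finset_sum]
  simp

lemma antider_natDegree (r : ℝ[X]) : (antider r).natDegree ≤ r.natDegree + 1 := by
  refine natDegree_sum_le_of_forall_le _ _ fun n hn => ?_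
  calc (C (r.coeff n / (n+1)) * X ^ (n+1)).natDegree ≤ n + 1 := natDegree_C_mul_X_pow_le _ _
    _ ≤ r.natDegree + 1 := by
        exact Nat.add_le_add_right (le_natDegree_of_mem_supp n hn) 1

lemma herm_unique (s : ℕ) (hs : 1 ≤ s) (q : ℝ[X]) (hdeg : q.natDegree ≤ 2 * s - 1)
    (h : ∀ k < s, (derivative^[k] q).eval 0 = 0 ∧ (derivative^[k] q).eval 1 = 0) : q = 0 := by
  by_contra hq
  have h0 : s ≤ q.rootMultiplicity 0 := by
    have := lt_rootMultiplicity_of_isRoot_iterate_derivative (t := (0:ℝ)) (n := s - 1) hq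
      (fun m hm => (h m (by omega)).1)
    omega
  have h1 : s ≤ q.rootMultiplicity 1 := by
    have := lt_rootMultiplicity_of_isRoot_iterate_derivative (t := (1:ℝ)) (n := s - 1) hq
      (fun m hm => (h m (by omega)).2)
    omega
  have d0 : (X - C (0:ℝ)) ^ s ∣ q := (pow_dvd_pow _ h0).trans (q.pow_rootMultiplicity_dvd 0)
  have d1 : (X - C (1:ℝ)) ^ s ∣ q := (pow_dvd_pow _ h1).trans (q.pow_rootMultiplicity_dvd 1)
  have hco : IsCoprime ((X - C (0:ℝ)) ^ s) ((X - C (1:ℝ)) ^ s) :=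
    IsCoprime.pow (isCoprime_X_sub_C_of_isUnit_sub (by norm_num))
  have hle := natDegree_le_of_dvd (hco.mul_dvd d0 d1) hq
  rw [natDegree_mul (pow_ne_zero _ (X_sub_C_ne_zero 0)) (pow_ne_zero _ (X_sub_C_ne_zero 1)),
    natDegree_pow, natDegree_pow, natDegree_X_sub_C, natDegree_X_sub_C] at hle
  omega

open MeasureTheory in
theorem hermitePoly_recursive_formula_aux (s j : ℕ) (hs : 2 ≤ s) (hj1 : 1 ≤ j)
    (hj2 : j ≤ s - 1) (p P r : Polynomial ℝ)
    (hp : IsHermitePoly s j p) (hP : IsHermitePoly s 0 P)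
    (hr : IsHermitePoly (s - 1) (j - 1) r) :
    ∀ x : ℝ, p.eval x =
      (∫ y in (0:ℝ)..x, r.eval y) + (P.eval x - 1) * ∫ y in (0:ℝ)..1, r.eval y := by
  obtain ⟨hpd, hpv⟩ := hp
  obtain ⟨hPd, hPv⟩ := hP
  obtain ⟨hrd, hrv⟩ := hr
  set R := antider r with hRdef
  set c : ℝ := R.eval 1 with hc
  have hdR : derivative R = r := derivative_antider r
  have hRdeg : R.natDegree ≤ 2 * s - 1 := (antider_natDegree r).trans (by omega)
  have hz : p - R - C c * (P - 1) = 0 := by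
    apply herm_unique s (by omega)
    · refine (natDegree_sub_le _ _).trans (max_le ((natDegree_sub_le _ _).trans
        (max_le hpd hRdeg)) ((natDegree_C_mul_le _ _).trans
        ((natDegree_sub_le _ _).trans ?_)))
      simp only [natDegree_one, max_le_iff]
      exact ⟨hPd, by omega⟩
    · intro k hk
      rw [iterate_derivative_sub, iterate_derivative_sub, iterate_derivative_C_mul,
        iterate_derivative_sub]
      match k with
      | 0 =>
        simp only [Function.iterate_zero, id_eq, eval_sub, eval_mul, eval_C, eval_one]
        have e1 := hpv 0 (by omega)
        have e2 := hPv 0 (by omega)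
        simp only [Function.iterate_zero, id_eq] at e1 e2
        rw [if_neg (by omega)] at e1
        norm_num at e2
        constructor
        · rw [e1.1, e2.1, antider_eval_zero]; ring
        · rw [e1.2, e2.2, ← hc]; ring
      | (m + 1) =>
        have hRit : derivative^[m + 1] R = derivative^[m] r := by
          rw [Function.iterate_succ_apply, hdR]
        have e1 := hpv (m + 1) hk
        have e2 := hPv (m + 1) hk
        have e3 := hrv m (by omega)
        rw [if_neg (by omega)] at e2
        simp only [show (j - 1 = m) ↔ (j = m + 1) from by omega] at e3
        simp only [iterate_derivative_one (Nat.succ_pos m), eval_sub, eval_mul, eval_C,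
          eval_zero, hRit]
        constructor
        · rw [e1.1, e2.1, e3.1]; ring
        · rw [e1.2, e2.2, e3.2]; ring
  have key : p = R + C c * (P - 1) := by linear_combination (norm := ring_nf) hz
  intro x
  have hint : ∀ b : ℝ, ∫ y in (0:ℝ)..b, r.eval y = R.eval b := by
    intro b
    rw [intervalIntegral.integral_eq_sub_of_hasDerivAt
      (f := fun y => R.eval y) (fun y _ => by simpa [hdR] using R.hasDerivAt y)
      ((Polynomial.continuous r).intervalIntegrable _ _), antider_eval_zero, sub_zero]
  rw [hint x, hint 1, key]
  simp only [eval_add, eval_mul, eval_sub, eval_C, eval_one, ← hc]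
  ring


/-- recursive integral formula linking the `(s,j)`-Hermite polynomial to
the `(s-1,j-1)`-Hermite polynomial and the `(s,0)`-Hermite polynomial. -/
theorem hermitePoly_recursive_formula (s j : ℕ) (hs : 2 ≤ s) (hj1 : 1 ≤ j)
    (hj2 : j ≤ s - 1) (p P r : Polynomial ℝ)
    (hp : IsHermitePoly s j p) (hP : IsHermitePoly s 0 P)
    (hr : IsHermitePoly (s - 1) (j - 1) r) :
    ∀ x : ℝ, p.eval x =
      (∫ y in (0:ℝ)..x, r.eval y) + (P.eval x - 1) * ∫ y in (0:ℝ)..1, r.eval y := by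
  exact hermitePoly_recursive_formula_aux s j hs hj1 hj2 p P r hp hP hr
end

section
/- Let s ≥ 2 and 1 ≤ j ≤ s−1 be integers. Let p be an (s,j)-Hermite polynomial, P an (s,0)-Hermite polynomial, and r an (s−1, j−1)-Hermite polynomial. Then (∫₀¹ p(x)² dx)^{1/2} ≤ (∫₀¹ P(x)² dx)^{1/2} · (∫₀¹ r(x)² dx)^{1/2}. -/
/-!
The first `s - 1` derivatives of `P'` and of `p' - r` vanish at both endpoints, and both have
degree at most `2s - 2`, so they are multiples of the bump `m = (x(1-x))^(s-1)`. Comparing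
derivatives and boundary values then gives the representation
`p(x) = P(x) ∫₀ˣ r + (P(x) - 1) ∫ₓ¹ r`. Cauchy–Schwarz on `[0,x]` and `[x,1]` bounds `p(x)²` by
`(x P(x)² + (1-x)(P(x)-1)²) ‖r‖²`, and the weight integrates to at most `‖P‖²`: since
`P' = d m` with `m` symmetric and nonnegative, an integration by parts gives
`∫ (1-x)(1-2P) = d ∫ x(1-x) m ≤ 0`.
-/

open Polynomial intervalIntegral Set

namespace Polynomial

variable {R : Type*} [CommRing R] [IsDomain R] [CharZero R]

theorem pow_X_sub_C_dvd_of_iterate_derivative_eval_eq_zero {q : R[X]} {a : R} {n : ℕ}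
    (h : ∀ k < n, (derivative^[k] q).eval a = 0) : (X - C a) ^ n ∣ q := by
  rcases eq_or_ne q 0 with rfl | hq
  · exact dvd_zero _
  cases n with
  | zero => simp
  | succ n =>
    rw [← le_rootMultiplicity_iff hq]
    exact lt_rootMultiplicity_of_isRoot_iterate_derivative hq fun k hk => h k (by omega)

theorem exists_eq_C_mul_X_mul_one_sub_X_pow {q : R[X]} {n : ℕ} (hdeg : q.natDegree ≤ 2 * n)
    (h0 : ∀ k < n, (derivative^[k] q).eval 0 = 0)
    (h1 : ∀ k < n, (derivative^[k] q).eval 1 = 0) :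
    ∃ c : R, q = C c * (X * (1 - X)) ^ n := by
  have hmonic0 : ((X - C 0) ^ n : R[X]).Monic := (monic_X_sub_C _).pow n
  have hmonic1 : ((X - C 1) ^ n : R[X]).Monic := (monic_X_sub_C _).pow n
  have hcop : IsCoprime ((X - C 0 : R[X]) ^ n) ((X - C 1) ^ n) :=
    (isCoprime_X_sub_C_of_isUnit_sub (by simp)).pow
  have hq := eq_leadingCoeff_mul_of_monic_of_dvd_of_natDegree_le (hmonic0.mul hmonic1)
    (hcop.mul_dvd (pow_X_sub_C_dvd_of_iterate_derivative_eval_eq_zero h0)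
      (pow_X_sub_C_dvd_of_iterate_derivative_eval_eq_zero h1))
    (by rw [hmonic0.natDegree_mul hmonic1, natDegree_pow, natDegree_pow, natDegree_X_sub_C,
      natDegree_X_sub_C]; omega)
  have hsign : (X - C 0) ^ n * (X - C 1) ^ n = C ((-1) ^ n) * (X * (1 - X) : R[X]) ^ n := by
    rw [← mul_pow, map_pow, map_neg, map_one, ← mul_pow, C_0]
    ring
  exact ⟨q.leadingCoeff * (-1) ^ n, hq.trans (by rw [hsign, ← mul_assoc, ← C_mul])⟩

end Polynomial

theorem sq_intervalIntegral_le {f : ℝ → ℝ} (hf : Continuous f) {a b : ℝ} (hab : a ≤ b) :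
    (∫ t in a..b, f t) ^ 2 ≤ (b - a) * ∫ t in a..b, f t ^ 2 := by
  set A := ∫ t in a..b, f t with hA
  rcases hab.eq_or_lt with rfl | hlt
  · simp [A]
  have hexpand : ∫ t in a..b, ((b - a) * f t - A) ^ 2
      = (b - a) * ((b - a) * (∫ t in a..b, f t ^ 2) - A ^ 2) := by
    have h : ∀ t, ((b - a) * f t - A) ^ 2
        = (b - a) ^ 2 * f t ^ 2 - 2 * (b - a) * A * f t + A ^ 2 := fun t => by ring
    simp only [h]
    rw [integral_add, integral_sub, integral_const_mul, integral_const_mul, integral_const]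
    · rw [smul_eq_mul, ← hA]; ring
    all_goals exact Continuous.intervalIntegrable (by fun_prop) _ _
  have hnonneg : 0 ≤ ∫ t in a..b, ((b - a) * f t - A) ^ 2 :=
    integral_nonneg hab fun t _ => sq_nonneg _
  rw [hexpand, mul_nonneg_iff_of_pos_left (sub_pos.2 hlt)] at hnonneg
  linarith

theorem sq_mul_add_mul_le {u v a b x y A B : ℝ} (hx : 0 ≤ x) (hy : 0 ≤ y) (hA : 0 ≤ A)
    (hB : 0 ≤ B) (ha : a ^ 2 ≤ x * A) (hb : b ^ 2 ≤ y * B) :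
    (u * a + v * b) ^ 2 ≤ (x * u ^ 2 + y * v ^ 2) * (A + B) := by
  have hprod : (u * v * a * b) ^ 2 ≤ (x * u ^ 2 * B) * (y * v ^ 2 * A) := by
    have := mul_le_mul ha hb (sq_nonneg b) (mul_nonneg hx hA)
    nlinarith [sq_nonneg (u * v)]
  have hamgm : 2 * (u * v * a * b) ≤ x * u ^ 2 * B + y * v ^ 2 * A := by
    refine (abs_le_of_sq_le_sq' ?_ (by positivity)).2
    nlinarith [four_mul_le_sq_add (x * u ^ 2 * B) (y * v ^ 2 * A)]
  nlinarith [mul_le_mul_of_nonneg_left ha (sq_nonneg u),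
    mul_le_mul_of_nonneg_left hb (sq_nonneg v)]

theorem sq_mul_integral_add_mul_integral_le {h : ℝ → ℝ} (hh : Continuous h) {x : ℝ}
    (hx : x ∈ Icc (0 : ℝ) 1) (u v : ℝ) :
    (u * (∫ t in 0..x, h t) + v * ∫ t in x..1, h t) ^ 2 ≤
      (x * u ^ 2 + (1 - x) * v ^ 2) * ∫ t in 0..1, h t ^ 2 := by
  have hh2 : Continuous fun t => h t ^ 2 := by fun_prop
  rw [← integral_add_adjacent_intervals (hh2.intervalIntegrable 0 x) (hh2.intervalIntegrable x 1)]
  refine sq_mul_add_mul_le hx.1 (sub_nonneg.2 hx.2) (integral_nonneg hx.1 fun t _ => sq_nonneg _)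
    (integral_nonneg hx.2 fun t _ => sq_nonneg _) ?_ (sq_intervalIntegral_le hh hx.2)
  simpa using sq_intervalIntegral_le hh hx.1

theorem mul_integral_eq_sub_of_hasDerivAt {F m : ℝ → ℝ} {e a b : ℝ}
    (hF : ∀ x, HasDerivAt F (e * m x) x) (hm : Continuous m) :
    e * ∫ x in a..b, m x = F b - F a := by
  rw [← integral_const_mul]
  exact integral_eq_sub_of_hasDerivAt (fun x _ => hF x)
    ((continuous_const.mul hm).intervalIntegrable _ _)

theorem eq_mul_integral_add_mul_integral {f g h m : ℝ → ℝ} {c d : ℝ} (hh : Continuous h)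
    (hm : Continuous m) (hf : ∀ x, HasDerivAt f (h x + c * m x) x)
    (hg : ∀ x, HasDerivAt g (d * m x) x) (hf0 : f 0 = 0) (hf1 : f 1 = 0) (hg0 : g 0 = 1)
    (hg1 : g 1 = 0) (x : ℝ) :
    f x = g x * (∫ t in 0..x, h t) + (g x - 1) * ∫ t in x..1, h t := by
  set F := fun x => f x - (g x * (∫ t in 0..x, h t) + (g x - 1) * ∫ t in x..1, h t)
  have hA : ∀ x, HasDerivAt (fun x => ∫ t in 0..x, h t) (h x) x := fun x =>
    (hh.integral_hasStrictDerivAt 0 x).hasDerivAt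
  have hB : ∀ x, HasDerivAt (fun x => ∫ t in x..1, h t) (-h x) x := fun x => by
    simp only [fun y => integral_symm (μ := MeasureTheory.volume) (f := h) 1 y]
    exact (hh.integral_hasStrictDerivAt 1 x).hasDerivAt.neg
  have hF : ∀ x, HasDerivAt F ((c - d * ∫ t in 0..1, h t) * m x) x := fun x => by
    refine ((hf x).sub (((hg x).mul (hA x)).add (((hg x).sub_const 1).mul (hB x)))).congr_deriv ?_
    rw [← integral_add_adjacent_intervals (hh.intervalIntegrable 0 x) (hh.intervalIntegrable x 1)]
    ring
  have hm0 : ∫ t in (0 : ℝ)..1, m t ≠ 0 := by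
    have := mul_integral_eq_sub_of_hasDerivAt (a := 0) (b := 1) hg hm
    rw [hg0, hg1] at this
    intro h0
    norm_num [h0] at this
  have hF01 : F 0 = F 1 := by simp [F, hf0, hf1, hg0, hg1]
  have he : c - d * ∫ t in 0..1, h t = 0 := by
    have := mul_integral_eq_sub_of_hasDerivAt (a := 0) (b := 1) hF hm
    rw [hF01, sub_self] at this
    exact (mul_eq_zero.1 this).resolve_right hm0
  have hFx : F x = F 0 := is_const_of_deriv_eq_zero (fun y => (hF y).differentiableAt)
    (fun y => by rw [(hF y).deriv, he, zero_mul]) x 0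
  simpa [F, hf0, hg0, sub_eq_zero] using hFx

theorem integral_mul_sq_add_one_sub_mul_sub_one_sq_le {g m : ℝ → ℝ} {d : ℝ}
    (hm : Continuous m) (hm_symm : ∀ x, m (1 - x) = m x) (hm_nonneg : ∀ x ∈ Icc (0 : ℝ) 1, 0 ≤ m x)
    (hg : ∀ x, HasDerivAt g (d * m x) x) (hg0 : g 0 = 1) (hg1 : g 1 = 0) :
    ∫ x in 0..1, (x * g x ^ 2 + (1 - x) * (g x - 1) ^ 2) ≤ ∫ x in 0..1, g x ^ 2 := by
  have hgc : Continuous g := continuous_iff_continuousAt.2 fun x => (hg x).continuousAt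
  have hd : d * ∫ x in 0..1, m x = -1 := by
    rw [mul_integral_eq_sub_of_hasDerivAt hg hm, hg0, hg1]; norm_num
  have hU : ∀ x, HasDerivAt (fun x => -(1 - x) ^ 2 / 2 * (1 - 2 * g x))
      ((1 - x) * (1 - 2 * g x) + d * ((1 - x) ^ 2 * m x)) x := fun x => by
    have h1 : HasDerivAt (fun x : ℝ => -(1 - x) ^ 2 / 2) (1 - x) x :=
      ((((hasDerivAt_id' x).const_sub 1).pow 2).neg.div_const 2).congr_deriv (by ring)
    exact (h1.mul (((hg x).const_mul 2).const_sub 1)).congr_deriv (by ring)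
  have hIBP : (∫ x in 0..1, (1 - x) * (1 - 2 * g x)) + d * ∫ x in 0..1, (1 - x) ^ 2 * m x
      = -1 / 2 := by
    rw [← integral_const_mul, ← integral_add, integral_eq_sub_of_hasDerivAt (fun x _ => hU x)]
    · norm_num [hg0, hg1]
    all_goals exact Continuous.intervalIntegrable (by fun_prop) _ _
  have hsymm : ∫ x in 0..1, (1 - x) ^ 2 * m x = ∫ x in 0..1, x ^ 2 * m x := by
    simpa [hm_symm] using
      integral_comp_sub_left (a := 0) (b := 1) (fun x => x ^ 2 * m x) (1 : ℝ)
  have hsplit : ∫ x in 0..1, m x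
      = (∫ x in 0..1, (1 - x) ^ 2 * m x) + (∫ x in 0..1, x ^ 2 * m x)
        + 2 * ∫ x in 0..1, x * (1 - x) * m x := by
    rw [← integral_const_mul, ← integral_add, ← integral_add]
    · congr 1; ext x; ring
    all_goals exact Continuous.intervalIntegrable (by fun_prop) _ _
  have hK : 0 ≤ ∫ x in 0..1, x * (1 - x) * m x := integral_nonneg zero_le_one fun x hx =>
    mul_nonneg (mul_nonneg hx.1 (sub_nonneg.2 hx.2)) (hm_nonneg x hx)
  have hIm : 0 ≤ ∫ x in 0..1, m x := integral_nonneg zero_le_one hm_nonneg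
  have hdneg : d ≤ 0 := by nlinarith
  have hdiff : ∫ x in 0..1, (x * g x ^ 2 + (1 - x) * (g x - 1) ^ 2)
      = (∫ x in 0..1, g x ^ 2) + d * ∫ x in 0..1, x * (1 - x) * m x := by
    have : ∫ x in 0..1, (1 - x) * (1 - 2 * g x) = d * ∫ x in 0..1, x * (1 - x) * m x := by
      linear_combination hIBP + d / 2 * hsplit - d / 2 * hsymm - hd / 2
    rw [← this, ← integral_add]
    · congr 1; ext x; ring
    all_goals exact Continuous.intervalIntegrable (by fun_prop) _ _
  rw [hdiff]
  linarith [mul_nonpos_of_nonpos_of_nonneg hdneg hK]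

theorem integral_sq_le_integral_sq_mul_integral_sq {f g h m : ℝ → ℝ} {c d : ℝ}
    (hh : Continuous h) (hm : Continuous m) (hm_symm : ∀ x, m (1 - x) = m x)
    (hm_nonneg : ∀ x ∈ Icc (0 : ℝ) 1, 0 ≤ m x) (hf : ∀ x, HasDerivAt f (h x + c * m x) x)
    (hg : ∀ x, HasDerivAt g (d * m x) x) (hf0 : f 0 = 0) (hf1 : f 1 = 0) (hg0 : g 0 = 1)
    (hg1 : g 1 = 0) :
    ∫ x in 0..1, f x ^ 2 ≤ (∫ x in 0..1, g x ^ 2) * ∫ x in 0..1, h x ^ 2 := by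
  have hfc : Continuous f := continuous_iff_continuousAt.2 fun x => (hf x).continuousAt
  have hgc : Continuous g := continuous_iff_continuousAt.2 fun x => (hg x).continuousAt
  calc ∫ x in 0..1, f x ^ 2
      ≤ ∫ x in 0..1, (x * g x ^ 2 + (1 - x) * (g x - 1) ^ 2) * ∫ t in 0..1, h t ^ 2 :=
        integral_mono_on zero_le_one (Continuous.intervalIntegrable (by fun_prop) _ _)
          (Continuous.intervalIntegrable (by fun_prop) _ _) fun x hx => by
            rw [eq_mul_integral_add_mul_integral hh hm hf hg hf0 hf1 hg0 hg1 x]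
            exact sq_mul_integral_add_mul_integral_le hh hx _ _
    _ = (∫ x in 0..1, (x * g x ^ 2 + (1 - x) * (g x - 1) ^ 2)) * ∫ t in 0..1, h t ^ 2 :=
        integral_mul_const _ _
    _ ≤ _ := mul_le_mul_of_nonneg_right
        (integral_mul_sq_add_one_sub_mul_sub_one_sq_le hm hm_symm hm_nonneg hg hg0 hg1)
        (integral_nonneg zero_le_one fun _ _ => sq_nonneg _)

namespace IsHermitePoly

variable {n j : ℕ} {p r : ℝ[X]}

theorem eval_zero (hp : IsHermitePoly (n + 1) j p) : p.eval 0 = if j = 0 then 1 else 0 := by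
  simpa using (hp.2 0 n.succ_pos).1

theorem eval_one (hp : IsHermitePoly (n + 1) j p) : p.eval 1 = 0 := by
  simpa using (hp.2 0 n.succ_pos).2

theorem exists_derivative_eq (hp : IsHermitePoly (n + 1) 0 p) :
    ∃ d : ℝ, derivative p = C d * (X * (1 - X)) ^ n := by
  refine exists_eq_C_mul_X_mul_one_sub_X_pow ?_ (fun k hk => ?_) (fun k hk => ?_)
  · have := natDegree_derivative_le p
    have := hp.1
    omega
  · rw [← Function.iterate_succ_apply]
    simpa using (hp.2 (k + 1) (by omega)).1
  · rw [← Function.iterate_succ_apply]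
    exact (hp.2 (k + 1) (by omega)).2

theorem exists_derivative_sub_eq (hp : IsHermitePoly (n + 1) (j + 1) p)
    (hr : IsHermitePoly n j r) : ∃ c : ℝ, derivative p - r = C c * (X * (1 - X)) ^ n := by
  refine exists_eq_C_mul_X_mul_one_sub_X_pow ?_ (fun k hk => ?_) (fun k hk => ?_)
  · have := natDegree_derivative_le p
    have := natDegree_sub_le (derivative p) r
    have := hp.1
    have := hr.1
    omega
  all_goals rw [iterate_derivative_sub, eval_sub, ← Function.iterate_succ_apply]
  · rw [(hp.2 (k + 1) (by omega)).1, (hr.2 k hk).1]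
    simp
  · rw [(hp.2 (k + 1) (by omega)).2, (hr.2 k hk).2, sub_zero]

end IsHermitePoly

theorem hermitePoly_l2_submultiplicative_general (s j : ℕ) (hj1 : 1 ≤ j)
    (hj2 : j ≤ s - 1) (p P r : Polynomial ℝ)
    (hp : IsHermitePoly s j p) (hP : IsHermitePoly s 0 P)
    (hr : IsHermitePoly (s - 1) (j - 1) r) :
    Real.sqrt (∫ x in (0:ℝ)..1, (p.eval x) ^ 2) ≤
      Real.sqrt (∫ x in (0:ℝ)..1, (P.eval x) ^ 2) *
        Real.sqrt (∫ x in (0:ℝ)..1, (r.eval x) ^ 2) := by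
  obtain ⟨n, rfl⟩ : ∃ n, s = n + 1 := ⟨s - 1, by omega⟩
  obtain ⟨i, rfl⟩ : ∃ i, j = i + 1 := ⟨j - 1, by omega⟩
  rw [Nat.add_sub_cancel, Nat.add_sub_cancel] at hr
  obtain ⟨d, hd⟩ := hP.exists_derivative_eq
  obtain ⟨c, hc⟩ := hp.exists_derivative_sub_eq hr
  rw [← Real.sqrt_mul (integral_nonneg zero_le_one fun _ _ => sq_nonneg _)]
  refine Real.sqrt_le_sqrt (integral_sq_le_integral_sq_mul_integral_sq
    (m := fun x => (x * (1 - x)) ^ n) (c := c) (d := d) r.continuous (by fun_prop)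
    (fun x => by ring)
    (fun x hx => pow_nonneg (mul_nonneg hx.1 (sub_nonneg.2 hx.2)) n) (fun x => ?_) (fun x => ?_)
    (by simpa using hp.eval_zero) hp.eval_one (by simpa using hP.eval_zero) hP.eval_one)
  · simpa [sub_eq_iff_eq_add'.1 hc] using p.hasDerivAt x
  · simpa [hd] using P.hasDerivAt x

/-- submultiplicativity of the `L²(0,1)` norm along the Hermite
recursion. -/
theorem hermitePoly_l2_submultiplicative (s j : ℕ) (hs : 2 ≤ s) (hj1 : 1 ≤ j)
    (hj2 : j ≤ s - 1) (p P r : Polynomial ℝ)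
    (hp : IsHermitePoly s j p) (hP : IsHermitePoly s 0 P)
    (hr : IsHermitePoly (s - 1) (j - 1) r) :
    Real.sqrt (∫ x in (0:ℝ)..1, (p.eval x) ^ 2) ≤
      Real.sqrt (∫ x in (0:ℝ)..1, (P.eval x) ^ 2) *
        Real.sqrt (∫ x in (0:ℝ)..1, (r.eval x) ^ 2) :=
  hermitePoly_l2_submultiplicative_general s j hj1 hj2 p P r hp hP hr
end

section
/- Let s ≥ 1 and 0 ≤ j ≤ s−1 be integers. If p is an (s,j)-Hermite polynomial and q is an (s,j)-dual Hermite polynomial, then ∫₀¹ q(x)² dx = ∫₀¹ p(x)² dx, and moreover ∫₀¹ p(x)² dx ≤ (1/2)^{j+1}; in particular the L²(0,1) norm of p is at most (√(1/2))^{j+1}. -/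
namespace HermAux

open Polynomial Finset MeasureTheory

lemma dvd_of_iterate_deriv_eval (r : ℝ[X]) (a : ℝ) (m : ℕ)
    (h : ∀ k < m, (derivative^[k] r).eval a = 0) : (X - C a) ^ m ∣ r := by
  rcases eq_or_ne r 0 with rfl | hr
  · exact dvd_zero _
  rcases Nat.eq_zero_or_pos m with rfl | hm
  · simpa using one_dvd r
  have h1 : m - 1 < r.rootMultiplicity a :=
    lt_rootMultiplicity_of_isRoot_iterate_derivative hr fun k hk => h k (by omega)
  exact (pow_dvd_pow _ (by omega)).trans (r.pow_rootMultiplicity_dvd a)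

lemma iterate_deriv_eval_of_dvd {r : ℝ[X]} {a : ℝ} {m k : ℕ}
    (hd : (X - C a) ^ m ∣ r) (hk : k < m) : (derivative^[k] r).eval a = 0 := by
  rcases eq_or_ne r 0 with rfl | hr
  · simp
  exact isRoot_iterate_derivative_of_lt_rootMultiplicity
    (lt_of_lt_of_le hk ((le_rootMultiplicity_iff hr).2 hd))

lemma eq_zero_of_double_dvd {r : ℝ[X]} {s : ℕ} (hs : 1 ≤ s)
    (hdeg : r.natDegree ≤ 2 * s - 1)
    (h0 : (X : ℝ[X]) ^ s ∣ r) (h1 : (X - C 1) ^ s ∣ r) : r = 0 := by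
  by_contra hr
  have hcop : IsCoprime (X : ℝ[X]) (X - C 1) := ⟨1, -1, by rw [C_1]; ring⟩
  have hdvd : (X : ℝ[X]) ^ s * (X - C 1) ^ s ∣ r := (hcop.pow).mul_dvd h0 h1
  have hle := Polynomial.natDegree_le_of_dvd hdvd hr
  rw [natDegree_mul (pow_ne_zero _ X_ne_zero)
      (pow_ne_zero _ (X_sub_C_ne_zero 1)), natDegree_pow, natDegree_pow,
      natDegree_X, natDegree_X_sub_C] at hle
  omega

lemma eq_zero_of_eval_conditions {s : ℕ} (hs : 1 ≤ s) {r : ℝ[X]}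
    (hdeg : r.natDegree ≤ 2 * s - 1)
    (h0 : ∀ k < s, (derivative^[k] r).eval 0 = 0)
    (h1 : ∀ k < s, (derivative^[k] r).eval 1 = 0) : r = 0 := by
  have d0 := dvd_of_iterate_deriv_eval r 0 s h0
  have d1 := dvd_of_iterate_deriv_eval r 1 s h1
  rw [map_zero, sub_zero] at d0
  exact eq_zero_of_double_dvd hs hdeg d0 d1


noncomputable def hP (s j : ℕ) : ℝ[X] :=
  C ((j.factorial : ℝ)⁻¹) * ∑ k ∈ Finset.range (s - j),
    C ((2 * s - j - 1).choose k : ℝ) * X ^ (k + j) * (1 - X) ^ (2 * s - j - 1 - k)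

lemma one_sub_X_eq : (1 - X : ℝ[X]) = -(X - C 1) := by rw [C_1]; ring

lemma natDegree_one_sub_X : (1 - X : ℝ[X]).natDegree = 1 := by
  rw [one_sub_X_eq, natDegree_neg, natDegree_X_sub_C]

lemma X_sub_C_pow_dvd_one_sub_X_pow {a b : ℕ} (h : a ≤ b) :
    (X - C 1 : ℝ[X]) ^ a ∣ (1 - X) ^ b := by
  rw [one_sub_X_eq, neg_pow]
  exact ((pow_dvd_pow _ h).mul_left _)

lemma hP_natDegree {s j : ℕ} (hj : j < s) : (hP s j).natDegree ≤ 2 * s - 1 := by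
  refine (natDegree_mul_le).trans ?_
  rw [natDegree_C]
  refine le_trans (le_of_eq (zero_add _)) ?_
  refine natDegree_sum_le_of_forall_le _ _ fun k hk => ?_
  rw [Finset.mem_range] at hk
  refine (natDegree_mul_le).trans (le_trans (add_le_add natDegree_mul_le le_rfl) ?_)
  rw [natDegree_C, natDegree_X_pow, natDegree_pow, natDegree_one_sub_X, zero_add]
  omega

lemma hP_dvd_one {s j : ℕ} (hj : j < s) : (X - C 1 : ℝ[X]) ^ s ∣ hP s j := by
  refine Dvd.dvd.mul_left ?_ _
  refine Finset.dvd_sum fun k hk => ?_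
  rw [Finset.mem_range] at hk
  exact (X_sub_C_pow_dvd_one_sub_X_pow (by omega)).mul_left _

lemma key_identity (s j : ℕ) (hj : j < s) :
    (X : ℝ[X]) ^ j = ∑ k ∈ Finset.range (2 * s - j - 1 + 1),
      C ((2 * s - j - 1).choose k : ℝ) * X ^ (k + j) * (1 - X) ^ (2 * s - j - 1 - k) := by
  set m := 2 * s - j - 1 with hm
  have h1 : ((X : ℝ[X]) + (1 - X)) ^ m = 1 := by
    have : ((X : ℝ[X]) + (1 - X)) = 1 := by ring
    rw [this, one_pow]
  have h2 := add_pow (X : ℝ[X]) (1 - X) m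
  rw [h1] at h2
  calc (X : ℝ[X]) ^ j = X ^ j * 1 := (mul_one _).symm
    _ = X ^ j * ∑ k ∈ Finset.range (m + 1), X ^ k * (1 - X) ^ (m - k) * ((m.choose k : ℕ) : ℝ[X]) := by rw [← h2]
    _ = _ := by
        rw [Finset.mul_sum]
        refine Finset.sum_congr rfl fun k hk => ?_
        rw [C_eq_natCast, pow_add]
        ring

lemma hP_sub_dvd {s j : ℕ} (hj : j < s) :
    (X : ℝ[X]) ^ s ∣ hP s j - C ((j.factorial : ℝ)⁻¹) * X ^ j := by
  set m := 2 * s - j - 1 with hm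
  have hsj : s - j ≤ m + 1 := by omega
  have hsplit := Finset.sum_range_add_sum_Ico
    (fun k => C ((m.choose k : ℕ) : ℝ) * X ^ (k + j) * (1 - X) ^ (m - k) : ℕ → ℝ[X]) hsj
  have : hP s j - C ((j.factorial : ℝ)⁻¹) * X ^ j
      = -(C ((j.factorial : ℝ)⁻¹) * ∑ k ∈ Finset.Ico (s - j) (m + 1),
          C ((m.choose k : ℕ) : ℝ) * X ^ (k + j) * (1 - X) ^ (m - k)) := by
    rw [hP]
    rw [key_identity s j hj]
    rw [← hm, ← hsplit]
    ring
  rw [this]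
  refine dvd_neg.mpr ?_
  refine Dvd.dvd.mul_left ?_ _
  refine Finset.dvd_sum fun k hk => ?_
  rw [Finset.mem_Ico] at hk
  have : (X : ℝ[X]) ^ s ∣ X ^ (k + j) := pow_dvd_pow _ (by omega)
  exact (this.mul_left _).mul_right _


lemma monomial_deriv_eval (j k : ℕ) :
    (derivative^[k] (C ((j.factorial : ℝ)⁻¹) * X ^ j)).eval 0
      = (if j = k then (1 : ℝ) else 0) := by
  rw [iterate_derivative_C_mul, iterate_derivative_X_pow_eq_C_mul]
  simp only [eval_mul, eval_C, eval_pow, eval_X]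
  rcases lt_trichotomy j k with h | rfl | h
  · rw [Nat.descFactorial_eq_zero_iff_lt.2 h, if_neg (by omega)]
    simp
  · rw [Nat.descFactorial_self, Nat.sub_self, pow_zero, if_pos rfl, mul_one]
    rw [inv_mul_cancel₀ (by exact_mod_cast j.factorial_ne_zero)]
  · rw [if_neg (by omega), zero_pow (by omega), mul_zero, mul_zero]

lemma hP_isHermite {s j : ℕ} (hs : 1 ≤ s) (hj : j < s) : IsHermitePoly s j (hP s j) := by
  refine ⟨hP_natDegree hj, fun k hk => ⟨?_, ?_⟩⟩
  · have hd : (X - C (0:ℝ)) ^ s ∣ hP s j - C ((j.factorial : ℝ)⁻¹) * X ^ j := by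
      rw [map_zero, sub_zero]; exact hP_sub_dvd hj
    have h0 := iterate_deriv_eval_of_dvd hd hk
    have h2 := monomial_deriv_eval j k
    have h3 : (derivative^[k] (hP s j)).eval 0
        - (derivative^[k] (C ((j.factorial : ℝ)⁻¹) * X ^ j)).eval 0 = 0 := by
      rw [← eval_sub, ← iterate_derivative_sub]; exact h0
    rw [← h2]; linarith
  · exact iterate_deriv_eval_of_dvd (hP_dvd_one hj) hk

lemma hermite_eq_hP {s j : ℕ} (hs : 1 ≤ s) (hj : j < s) {p : ℝ[X]}
    (hp : IsHermitePoly s j p) : p = hP s j := by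
  have hh := hP_isHermite hs hj
  have h := eq_zero_of_eval_conditions hs (r := p - hP s j)
    ((natDegree_sub_le _ _).trans (max_le hp.1 hh.1))
    (fun k hk => by
      rw [iterate_derivative_sub, eval_sub, (hp.2 k hk).1, (hh.2 k hk).1, sub_self])
    (fun k hk => by
      rw [iterate_derivative_sub, eval_sub, (hp.2 k hk).2, (hh.2 k hk).2, sub_self])
  have := sub_eq_zero.mp h
  exact this

noncomputable def hQ (s j : ℕ) : ℝ[X] := C ((-1 : ℝ) ^ j) * (hP s j).comp (1 - X)

lemma hQ_isDual {s j : ℕ} (hs : 1 ≤ s) (hj : j < s) : IsDualHermitePoly s j (hQ s j) := by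
  have hh := hP_isHermite hs hj
  refine ⟨?_, fun k hk => ?_⟩
  · refine natDegree_mul_le.trans ?_
    rw [natDegree_C, zero_add]
    refine (natDegree_comp_le).trans ?_
    calc (hP s j).natDegree * (1 - X : ℝ[X]).natDegree ≤ (2*s-1) * 1 := by
          refine Nat.mul_le_mul (hP_natDegree hj) ?_
          rw [natDegree_one_sub_X]
      _ = 2*s-1 := mul_one _
  · have hder : derivative^[k] (hQ s j)
        = C ((-1:ℝ)^j) * ((-1)^k * (derivative^[k] (hP s j)).comp (1 - X)) := by
      rw [hQ, iterate_derivative_C_mul, iterate_derivative_comp_one_sub_X]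
    constructor
    · rw [hder]
      simp only [eval_mul, eval_C, eval_pow, eval_neg, eval_one, eval_comp, eval_sub, eval_X]
      rw [sub_zero, (hh.2 k hk).2, mul_zero, mul_zero]
    · rw [hder]
      simp only [eval_mul, eval_C, eval_pow, eval_neg, eval_one, eval_comp, eval_sub, eval_X]
      rw [sub_self,  (hh.2 k hk).1]
      by_cases h : j = k
      · subst h
        rw [if_pos rfl, mul_one, ← pow_add, Even.neg_one_pow ⟨j, by ring⟩]
      · rw [if_neg h]; simp

lemma dual_eq_hQ {s j : ℕ} (hs : 1 ≤ s) (hj : j < s) {q : ℝ[X]}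
    (hq : IsDualHermitePoly s j q) : q = hQ s j := by
  have hh := hQ_isDual hs hj
  have h := eq_zero_of_eval_conditions hs (r := q - hQ s j)
    ((natDegree_sub_le _ _).trans (max_le hq.1 hh.1))
    (fun k hk => by
      rw [iterate_derivative_sub, eval_sub, (hq.2 k hk).1, (hh.2 k hk).1, sub_self])
    (fun k hk => by
      rw [iterate_derivative_sub, eval_sub, (hq.2 k hk).2, (hh.2 k hk).2, sub_self])
  exact sub_eq_zero.mp h


lemma real_sum_choose_eq_one {m : ℕ} {x : ℝ} :
    ∑ k ∈ Finset.range (m+1), (m.choose k : ℝ) * x^k * (1-x)^(m-k) = 1 := by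
  have h := add_pow x (1-x) m
  have hx : x + (1-x) = 1 := by ring
  rw [hx, one_pow] at h
  calc ∑ k ∈ Finset.range (m+1), (m.choose k : ℝ) * x^k * (1-x)^(m-k)
      = ∑ k ∈ Finset.range (m+1), x^k * (1-x)^(m-k) * (m.choose k : ℝ) :=
        Finset.sum_congr rfl fun k _ => by ring
    _ = 1 := h.symm

lemma real_sum_le_one {m t : ℕ} (ht : t ≤ m + 1) {x : ℝ} (h0 : 0 ≤ x) (h1 : x ≤ 1) :
    ∑ k ∈ Finset.range t, (m.choose k : ℝ) * x^k * (1-x)^(m-k) ≤ 1 := by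
  have hx : (0:ℝ) ≤ 1 - x := by linarith
  calc ∑ k ∈ Finset.range t, (m.choose k : ℝ) * x^k * (1-x)^(m-k)
      ≤ ∑ k ∈ Finset.range (m+1), (m.choose k : ℝ) * x^k * (1-x)^(m-k) :=
        Finset.sum_le_sum_of_subset_of_nonneg
          (Finset.range_subset_range.2 ht) (fun i _ _ => by positivity)
    _ = 1 := real_sum_choose_eq_one

lemma real_sum_le_half {s j : ℕ} (hj : j < s) {x : ℝ} (hx : 1/2 ≤ x) (h1 : x ≤ 1) :
    ∑ k ∈ Finset.range (s - j), ((2*s-j-1).choose k : ℝ) * x^k * (1-x)^(2*s-j-1-k) ≤ 1/2 := by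
  set m := 2*s-j-1 with hm
  set a : ℕ → ℝ := fun k => (m.choose k : ℝ) * x^k * (1-x)^(m-k) with ha
  have hxx : (0:ℝ) ≤ 1 - x := by linarith
  have hx0 : (0:ℝ) ≤ x := by linarith
  have hxle : 1 - x ≤ x := by linarith
  have hnn : ∀ k, 0 ≤ a k := fun k => by
    simp only [ha]; positivity
  have hterm : ∀ k ∈ Finset.range (s - j), a k ≤ a (m - k) := by
    intro k hk
    rw [Finset.mem_range] at hk
    have hk2 : 2 * k < m := by omega
    have e1 : m - k = k + (m - 2*k) := by omega
    have e2 : m - (m - k) = k := by omega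
    have e3 : m.choose (m - k) = m.choose k := Nat.choose_symm (by omega)
    simp only [ha]
    rw [e3, e2, e1]
    have key : (1-x)^(m-2*k) ≤ x^(m-2*k) := pow_le_pow_left₀ hxx hxle _
    calc ((m.choose k : ℝ)) * x^k * (1-x)^(k + (m-2*k))
        = ((m.choose k : ℝ) * x^k * (1-x)^k) * (1-x)^(m-2*k) := by rw [pow_add]; ring
      _ ≤ ((m.choose k : ℝ) * x^k * (1-x)^k) * x^(m-2*k) := by
          refine mul_le_mul_of_nonneg_left key (by positivity)
      _ = (m.choose k : ℝ) * x^(k + (m-2*k)) * (1-x)^k := by rw [pow_add]; ring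
  have hA : ∑ k ∈ Finset.range (s-j), a k ≤ ∑ k ∈ Finset.range (s-j), a (m-k) :=
    Finset.sum_le_sum hterm
  have hreindex : ∑ k ∈ Finset.range (s-j), a (m-k) = ∑ l ∈ Finset.Ico s (m+1), a l := by
    refine Finset.sum_nbij' (fun k => m - k) (fun l => m - l) ?_ ?_ ?_ ?_ ?_
    · intro k hk; rw [Finset.mem_range] at hk; rw [Finset.mem_Ico]
      show s ≤ m - k ∧ m - k < m + 1; omega
    · intro l hl; rw [Finset.mem_Ico] at hl; rw [Finset.mem_range]
      show m - l < s - j; omega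
    · intro k hk; rw [Finset.mem_range] at hk
      show m - (m - k) = k; omega
    · intro l hl; rw [Finset.mem_Ico] at hl
      show m - (m - l) = l; omega
    · intro k hk; rfl
  have hsub : ∑ l ∈ Finset.Ico s (m+1), a l ≤ ∑ l ∈ Finset.Ico (s-j) (m+1), a l :=
    Finset.sum_le_sum_of_subset_of_nonneg
      (Finset.Ico_subset_Ico (by omega) le_rfl) (fun i _ _ => hnn i)
  have hsplit : (∑ k ∈ Finset.range (s-j), a k) + ∑ l ∈ Finset.Ico (s-j) (m+1), a l
      = ∑ k ∈ Finset.range (m+1), a k :=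
    Finset.sum_range_add_sum_Ico a (by omega)
  have hone : ∑ k ∈ Finset.range (m+1), a k = 1 := real_sum_choose_eq_one
  have : ∑ k ∈ Finset.range (s-j), a k ≤ ∑ l ∈ Finset.Ico (s-j) (m+1), a l := by
    calc ∑ k ∈ Finset.range (s-j), a k ≤ ∑ k ∈ Finset.range (s-j), a (m-k) := hA
      _ = ∑ l ∈ Finset.Ico s (m+1), a l := hreindex
      _ ≤ _ := hsub
  linarith


lemma hP_eval (s j : ℕ) (x : ℝ) :
    (hP s j).eval x = (j.factorial : ℝ)⁻¹ * ∑ k ∈ Finset.range (s - j),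
      ((2*s-j-1).choose k : ℝ) * x^(k+j) * (1-x)^(2*s-j-1-k) := by
  rw [hP, eval_mul, eval_C, eval_finset_sum]
  congr 1
  refine Finset.sum_congr rfl fun k _ => by
    simp [eval_mul, eval_pow, eval_sub, eval_one, eval_X, eval_C]

lemma hP_eval_factor (s j : ℕ) (x : ℝ) :
    (hP s j).eval x = (j.factorial : ℝ)⁻¹ * (x^j * ∑ k ∈ Finset.range (s - j),
      ((2*s-j-1).choose k : ℝ) * x^k * (1-x)^(2*s-j-1-k)) := by
  rw [hP_eval]
  congr 1
  rw [Finset.mul_sum]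
  refine Finset.sum_congr rfl fun k _ => by rw [pow_add]; ring

lemma hP_eval_nonneg {s j : ℕ} {x : ℝ} (h0 : 0 ≤ x) (h1 : x ≤ 1) :
    0 ≤ (hP s j).eval x := by
  rw [hP_eval]
  have hx : (0:ℝ) ≤ 1 - x := by linarith
  refine mul_nonneg (by positivity) (Finset.sum_nonneg fun k _ => by positivity)

lemma hP_eval_le_pow {s j : ℕ} (hj : j < s) {x : ℝ} (h0 : 0 ≤ x) (h1 : x ≤ 1) :
    (hP s j).eval x ≤ (j.factorial : ℝ)⁻¹ * x^j := by
  rw [hP_eval_factor]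
  refine mul_le_mul_of_nonneg_left ?_ (by positivity)
  have hsum := real_sum_le_one (m := 2*s-j-1) (t := s-j) (by omega) h0 h1
  calc x^j * ∑ k ∈ Finset.range (s - j),
        ((2*s-j-1).choose k : ℝ) * x^k * (1-x)^(2*s-j-1-k)
      ≤ x^j * 1 := mul_le_mul_of_nonneg_left hsum (by positivity)
    _ = x^j := mul_one _

lemma hP_eval_le_half {s j : ℕ} (hj : j < s) {x : ℝ} (hx : 1/2 ≤ x) (h1 : x ≤ 1) :
    (hP s j).eval x ≤ (j.factorial : ℝ)⁻¹ * (1/2) := by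
  rw [hP_eval_factor]
  refine mul_le_mul_of_nonneg_left ?_ (by positivity)
  have h0 : (0:ℝ) ≤ x := by linarith
  have hxj : x ^ j ≤ 1 := pow_le_one₀ h0 h1
  have hs2 := real_sum_le_half hj hx h1
  have hsnn : 0 ≤ ∑ k ∈ Finset.range (s - j),
      ((2*s-j-1).choose k : ℝ) * x^k * (1-x)^(2*s-j-1-k) := by
    have hxx : (0:ℝ) ≤ 1 - x := by linarith
    exact Finset.sum_nonneg fun k _ => by positivity
  calc x^j * ∑ k ∈ Finset.range (s - j),
        ((2*s-j-1).choose k : ℝ) * x^k * (1-x)^(2*s-j-1-k)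
      ≤ 1 * (1/2) := mul_le_mul hxj hs2 hsnn (by norm_num)
    _ = 1/2 := one_mul _


lemma hP_symm {s : ℕ} (hs : 1 ≤ s) (x : ℝ) :
    (hP s 0).eval x + (hP s 0).eval (1 - x) = 1 := by
  have hj : (0:ℕ) < s := hs
  have hsub : (X:ℝ[X])^s ∣ hP s 0 - 1 := by
    have h := hP_sub_dvd (s := s) (j := 0) hj
    norm_num at h
    convert h using 2
  obtain ⟨g, hg⟩ := hP_dvd_one (s := s) (j := 0) hj
  obtain ⟨h, hh⟩ := hsub
  have hcomp0 : (X:ℝ[X])^s ∣ (hP s 0).comp (1 - X) := by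
    rw [hg, mul_comp, pow_comp, sub_comp, X_comp, C_comp]
    have hx : ((1:ℝ[X]) - X - C 1) = -X := by rw [C_1]; ring
    rw [hx, neg_pow]
    exact (dvd_rfl.mul_left _).mul_right _
  have hcomp1 : (X - C 1:ℝ[X])^s ∣ (hP s 0).comp (1 - X) - 1 := by
    have : (hP s 0).comp (1 - X) - 1 = (1-X)^s * h.comp (1-X) := by
      have := congrArg (fun r => Polynomial.comp r (1 - X)) hh
      simpa [sub_comp, one_comp, mul_comp, pow_comp, X_comp] using this
    rw [this]
    exact (X_sub_C_pow_dvd_one_sub_X_pow le_rfl).mul_right _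
  set r : ℝ[X] := hP s 0 + (hP s 0).comp (1 - X) - 1 with hr
  have hrdvd0 : (X:ℝ[X])^s ∣ r := by
    have : r = (hP s 0 - 1) + (hP s 0).comp (1 - X) := by rw [hr]; ring
    rw [this]
    exact dvd_add ⟨h, hh⟩ hcomp0
  have hrdvd1 : (X - C 1:ℝ[X])^s ∣ r := by
    have : r = hP s 0 + ((hP s 0).comp (1 - X) - 1) := by rw [hr]; ring
    rw [this]
    exact dvd_add (hP_dvd_one hj) hcomp1
  have hrdeg : r.natDegree ≤ 2 * s - 1 := by
    refine (natDegree_sub_le _ _).trans (max_le ((natDegree_add_le _ _).trans (max_le (hP_natDegree hj) ?_)) (by simp))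
    refine natDegree_comp_le.trans ?_
    have h1 : (1 - X : ℝ[X]).natDegree = 1 := by
      rw [one_sub_X_eq, natDegree_neg, natDegree_X_sub_C]
    rw [h1, mul_one]
    exact hP_natDegree hj
  have hr0 : r = 0 := eq_zero_of_double_dvd hs hrdeg hrdvd0 hrdvd1
  have h2 := congrArg (Polynomial.eval x) hr0
  simp only [hr, eval_add, eval_sub, eval_comp, eval_one, eval_X, eval_zero] at h2
  linarith


lemma fact_sq_ge {j : ℕ} (hj : 1 ≤ j) : 2^(j-1) ≤ (j.factorial)^2 := by
  induction j with
  | zero => omega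
  | succ n ih =>
    rcases Nat.eq_zero_or_pos n with rfl | hn
    · simp
    · have h := ih hn
      have : (n+1).factorial^2 = (n+1)^2 * n.factorial^2 := by
        rw [Nat.factorial_succ]; ring
      rw [this]
      have h2 : 2^(n+1-1) = 2 * 2^(n-1) := by
        rw [← pow_succ']
        congr 1
        omega
      calc 2^(n+1-1) = 2 * 2^(n-1) := h2
        _ ≤ 2 * n.factorial^2 := by omega
        _ ≤ (n+1)^2 * n.factorial^2 := by
            have : 2 ≤ (n+1)^2 := by nlinarith
            exact Nat.mul_le_mul_right _ this


lemma sqrt_pow_half (j : ℕ) : Real.sqrt ((1/2:ℝ)^(j+1)) = Real.sqrt (1/2) ^ (j+1) := by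
  have hb : ((Real.sqrt (1/2))^(j+1))^2 = (1/2:ℝ)^(j+1) := by
    rw [← pow_mul, mul_comm (j+1) 2, pow_mul, Real.sq_sqrt (by norm_num)]
  rw [← hb, Real.sqrt_sq (pow_nonneg (Real.sqrt_nonneg _) _)]


end HermAux

open MeasureTheory

open HermAux Polynomial

/-- the `(s,j)`-dual Hermite polynomial has the same squared `L²(0,1)`
norm as the `(s,j)`-Hermite polynomial, which is bounded by `(1/2)^(j+1)`; in
particular the `L²(0,1)` norm of `p` is at most `(√(1/2))^(j+1)`. -/
theorem hermitePoly_l2_bounds (s j : ℕ) (hs : 1 ≤ s) (hj : j ≤ s - 1)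
    (p q : Polynomial ℝ) (hp : IsHermitePoly s j p) (hq : IsDualHermitePoly s j q) :
    (∫ x in (0:ℝ)..1, (q.eval x) ^ 2) = (∫ x in (0:ℝ)..1, (p.eval x) ^ 2) ∧
      (∫ x in (0:ℝ)..1, (p.eval x) ^ 2) ≤ (1 / 2) ^ (j + 1) ∧
      Real.sqrt (∫ x in (0:ℝ)..1, (p.eval x) ^ 2) ≤ Real.sqrt (1 / 2) ^ (j + 1) := by
  have hj' : j < s := by omega
  have hp' : p = hP s j := hermite_eq_hP hs hj' hp
  have hq' : q = hQ s j := dual_eq_hQ hs hj' hq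
  have hcont : Continuous fun x : ℝ => ((hP s j).eval x)^2 := ((hP s j).continuous).pow 2
  have hint : ∀ a b : ℝ, IntervalIntegrable (fun x => ((hP s j).eval x)^2) volume a b :=
    fun a b => hcont.intervalIntegrable a b
  -- first part
  have part1 : (∫ x in (0:ℝ)..1, (q.eval x) ^ 2) = ∫ x in (0:ℝ)..1, (p.eval x) ^ 2 := by
    have hqx : ∀ x : ℝ, (q.eval x)^2 = ((hP s j).eval (1 - x))^2 := by
      intro x
      rw [hq', hQ, eval_mul, eval_C, eval_comp, eval_sub, eval_one, eval_X, mul_pow,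
        ← pow_mul, mul_comm j 2, pow_mul, neg_one_sq, one_pow, one_mul]
    simp only [hqx, hp']
    have h := intervalIntegral.integral_comp_sub_left (a := (0:ℝ)) (b := 1)
      (fun x => ((hP s j).eval x)^2) 1
    rw [h]
    norm_num
  -- second part
  have part2 : (∫ x in (0:ℝ)..1, (p.eval x) ^ 2) ≤ (1/2 : ℝ) ^ (j + 1) := by
    rw [hp']
    rcases Nat.eq_zero_or_pos j with rfl | hj1
    · -- j = 0
      have hle : (∫ x in (0:ℝ)..1, ((hP s 0).eval x) ^ 2) ≤ ∫ x in (0:ℝ)..1, (hP s 0).eval x := by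
        refine intervalIntegral.integral_mono_on zero_le_one (hint 0 1)
          (((hP s 0).continuous).intervalIntegrable 0 1) fun x hx => ?_
        obtain ⟨h0, h1⟩ := hx
        have e0 := hP_eval_nonneg (s := s) (j := 0) h0 h1
        have e1 : (hP s 0).eval x ≤ 1 := by
          have := hP_eval_le_pow (s := s) (j := 0) hj' h0 h1
          simpa using this
        nlinarith
      have hval : (∫ x in (0:ℝ)..1, (hP s 0).eval x) = 1/2 := by
        have hic : IntervalIntegrable (fun x => (hP s 0).eval x) volume 0 1 :=
          ((hP s 0).continuous).intervalIntegrable 0 1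
        have hic2 : IntervalIntegrable (fun x => (hP s 0).eval (1 - x)) volume 0 1 := by
          have : Continuous fun x : ℝ => (hP s 0).eval (1 - x) :=
            (hP s 0).continuous.comp (by continuity)
          exact this.intervalIntegrable 0 1
        have hsum : (∫ x in (0:ℝ)..1, ((hP s 0).eval x + (hP s 0).eval (1 - x))) = 1 := by
          have : (∫ x in (0:ℝ)..1, ((hP s 0).eval x + (hP s 0).eval (1 - x)))
              = ∫ x in (0:ℝ)..1, (1:ℝ) := by
            refine intervalIntegral.integral_congr fun x _ => hP_symm hs x
          rw [this]
          simp
        rw [intervalIntegral.integral_add hic hic2] at hsum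
        have hflip : (∫ x in (0:ℝ)..1, (hP s 0).eval (1 - x)) = ∫ x in (0:ℝ)..1, (hP s 0).eval x := by
          have h := intervalIntegral.integral_comp_sub_left (a := (0:ℝ)) (b := 1)
            (fun x => (hP s 0).eval x) 1
          rw [h]
          norm_num
        rw [hflip] at hsum
        linarith
      rw [hval] at hle
      calc (∫ x in (0:ℝ)..1, ((hP s 0).eval x) ^ 2) ≤ 1/2 := hle
        _ = (1/2:ℝ)^(0+1) := by norm_num
    · -- j ≥ 1
      have hsplit : (∫ x in (0:ℝ)..1, ((hP s j).eval x) ^ 2)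
          = (∫ x in (0:ℝ)..(1/2), ((hP s j).eval x) ^ 2)
            + ∫ x in (1/2:ℝ)..1, ((hP s j).eval x) ^ 2 :=
        (intervalIntegral.integral_add_adjacent_intervals (hint 0 (1/2)) (hint (1/2) 1)).symm
      have hfac1 : (1:ℝ) ≤ (j.factorial : ℝ) := by
        exact_mod_cast Nat.one_le_iff_ne_zero.mpr j.factorial_ne_zero
      have hinv1 : ((j.factorial : ℝ))⁻¹ ≤ 1 := by
        rw [inv_le_one_iff₀]; right; exact hfac1
      have hinv0 : (0:ℝ) ≤ ((j.factorial : ℝ))⁻¹ := by positivity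
      have b1 : (∫ x in (0:ℝ)..(1/2), ((hP s j).eval x) ^ 2) ≤ (1/2:ℝ)^(j+2) := by
        have hmono : (∫ x in (0:ℝ)..(1/2), ((hP s j).eval x) ^ 2)
            ≤ ∫ x in (0:ℝ)..(1/2), x^(2*j) := by
          refine intervalIntegral.integral_mono_on (by norm_num) (hint 0 (1/2))
            ((continuous_pow (2*j)).intervalIntegrable 0 (1/2)) fun x hx => ?_
          obtain ⟨h0, h12⟩ := hx
          have h1 : x ≤ 1 := by linarith
          have e0 := hP_eval_nonneg (s := s) (j := j) h0 h1
          have e1 := hP_eval_le_pow hj' h0 h1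
          have hxj : (0:ℝ) ≤ x^j := by positivity
          have hpow : x^(2*j) = (x^j)^2 := by rw [← pow_mul, mul_comm]
          rw [hpow]
          have e2 : (hP s j).eval x ≤ x^j :=
            le_trans e1 (mul_le_of_le_one_left hxj hinv1)
          exact pow_le_pow_left₀ e0 e2 2
        have hcomp : (∫ x in (0:ℝ)..(1/2), x^(2*j)) ≤ (1/2:ℝ)^(j+2) := by
          rw [integral_pow]
          have h2j : ((1:ℝ)/2)^(2*j+1) ≤ (1/2:ℝ)^(j+2) := by
            refine pow_le_pow_of_le_one (by norm_num) (by norm_num) (by omega)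
          have hj0 : (0:ℝ) ≤ (j:ℝ) := Nat.cast_nonneg j
          push_cast
          calc ((1/2:ℝ)^(2*j+1) - 0^(2*j+1)) / (2*(j:ℝ)+1)
              = (1/2:ℝ)^(2*j+1) / (2*(j:ℝ)+1) := by
                rw [zero_pow (by omega), sub_zero]
            _ ≤ (1/2:ℝ)^(2*j+1) := by
                refine div_le_self (by positivity) (by linarith)
            _ ≤ (1/2:ℝ)^(j+2) := h2j
        linarith
      have b2 : (∫ x in (1/2:ℝ)..1, ((hP s j).eval x) ^ 2) ≤ (1/2:ℝ)^(j+2) := by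
        have hmono : (∫ x in (1/2:ℝ)..1, ((hP s j).eval x) ^ 2)
            ≤ ∫ x in (1/2:ℝ)..1, (((j.factorial : ℝ))⁻¹ * (1/2))^2 := by
          refine intervalIntegral.integral_mono_on (by norm_num) (hint (1/2) 1)
            (intervalIntegrable_const) fun x hx => ?_
          obtain ⟨h12, h1⟩ := hx
          have e0 := hP_eval_nonneg (s := s) (j := j) (by linarith) h1
          have e1 := hP_eval_le_half hj' h12 h1
          exact pow_le_pow_left₀ e0 e1 2
        have hconst : (∫ x in (1/2:ℝ)..1, (((j.factorial : ℝ))⁻¹ * (1/2))^2)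
            = (((j.factorial : ℝ))⁻¹)^2 / 8 := by
          rw [intervalIntegral.integral_const]
          simp
          ring
        have hfs : (2:ℝ)^(j-1) ≤ ((j.factorial : ℝ))^2 := by
          exact_mod_cast fact_sq_ge hj1
        have hfinal : (((j.factorial : ℝ))⁻¹)^2 / 8 ≤ (1/2:ℝ)^(j+2) := by
          have hpos : (0:ℝ) < ((j.factorial : ℝ))^2 := by positivity
          have h8 : (1/2:ℝ)^(j+2) = 1 / (2^(j+2)) := by
            rw [div_pow, one_pow]
          rw [h8]
          rw [inv_pow, inv_eq_one_div, div_div]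
          refine div_le_div_of_nonneg_left (by norm_num) (by positivity) ?_
          have : (2:ℝ)^(j+2) = 8 * 2^(j-1) := by
            have hj2 : j + 2 = (j-1) + 3 := by omega
            rw [hj2, pow_add]
            ring
          rw [this]
          nlinarith
        rw [hconst] at hmono
        linarith
      have hsum : (1/2:ℝ)^(j+2) + (1/2:ℝ)^(j+2) = (1/2:ℝ)^(j+1) := by
        rw [pow_succ]
        ring
      rw [hsplit]
      linarith
  refine ⟨part1, part2, ?_⟩
  calc Real.sqrt (∫ x in (0:ℝ)..1, (p.eval x) ^ 2)
      ≤ Real.sqrt ((1/2:ℝ)^(j+1)) := Real.sqrt_le_sqrt part2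
    _ = Real.sqrt (1/2) ^ (j+1) := sqrt_pow_half j
end

section
/- Let s ≥ 1 be an integer and let f : ℝ → ℝ be s-times continuously differentiable. For each 0 ≤ j ≤ s−1, let p_j be an (s,j)-Hermite polynomial and q_j an (s,j)-dual Hermite polynomial, and define the polynomial p_f := Σ_{j=0}^{s−1} (f^{(j)}(1) − f^{(j)}(0)) · (p_j − q_j). Then (∫₀¹ p_f(x)² dx)^{1/2} ≤ 2 · (Σ_{k=1}^{s} ∫₀¹ f^{(k)}(x)² dx)^{1/2}. -/
open MeasureTheory Finset

section Aux
open Polynomial intervalIntegral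

noncomputable def Bpoly (s N : ℕ) : ℝ[X] :=
  ∑ i ∈ Finset.range (N+1), C ((s+i).choose i : ℝ) * X ^ i

lemma bpoly_natDegree_le (s N : ℕ) : (Bpoly s N).natDegree ≤ N := by
  rw [Bpoly]
  refine (Polynomial.natDegree_sum_le _ _).trans ?_
  rw [Finset.fold_max_le]
  refine ⟨Nat.zero_le _, fun i hi => ?_⟩
  exact (natDegree_C_mul_X_pow_le _ _).trans (by
    simpa using Nat.lt_succ_iff.mp (Finset.mem_range.mp hi))

noncomputable def Pexp (t j : ℕ) : ℝ[X] :=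
  C (1/(j.factorial) : ℝ) * (X^j * ((1-X)^(t+1) * Bpoly t (t-j)))

noncomputable def Tb (j : ℕ) : ℝ :=
  if j = 0 then 1 else 2/((2*j+1)*(j.factorial)^2) + 2/(4^j*(j.factorial)^2)


lemma bpoly_eval_nonneg (s N : ℕ) {x : ℝ} (hx : 0 ≤ x) : 0 ≤ (Bpoly s N).eval x := by
  rw [Bpoly]
  simp only [eval_finset_sum, eval_mul, eval_C, eval_pow, eval_X]
  exact Finset.sum_nonneg fun i _ => mul_nonneg (by positivity) (pow_nonneg hx i)

lemma bpoly_succ (s N : ℕ) :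
    Bpoly s (N+1) = Bpoly s N + C ((s+(N+1)).choose (N+1) : ℝ) * X^(N+1) := by
  simp [Bpoly, Finset.sum_range_succ]

lemma bpoly_zero_mul (N : ℕ) : (1 - X) * Bpoly 0 N = 1 - X^(N+1) := by
  induction N with
  | zero => simp [Bpoly]
  | succ N ih =>
    rw [bpoly_succ, mul_add, ih]
    simp
    ring

lemma bpoly_succ_mul (s N : ℕ) :
    (1 - X) * Bpoly (s+1) N = Bpoly s N - C ((s+1+N).choose N : ℝ) * X^(N+1) := by
  induction N with
  | zero => simp [Bpoly]
  | succ N ih =>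
    have pascal : (((s+1)+(N+1)).choose (N+1) : ℝ)
        = ((s+1+N).choose N : ℝ) + ((s+(N+1)).choose (N+1) : ℝ) := by
      rw [show s+1+(N+1) = (s+1+N)+1 from rfl, Nat.choose_succ_succ, Nat.cast_add,
        show s+1+N = s+(N+1) by ring]
    have hc : C (((s+1)+(N+1)).choose (N+1) : ℝ)
        = C ((s+1+N).choose N : ℝ) + C ((s+(N+1)).choose (N+1) : ℝ) := by
      rw [pascal, map_add]
    have h1 := bpoly_succ (s+1) N
    have hB := bpoly_succ s N
    linear_combination (1 - X) * h1 + ih - hB + X^(N+1) * hc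

lemma bpoly_key (s N : ℕ) : ∃ e : ℝ[X], (1-X)^(s+1) * Bpoly s N = 1 - X^(N+1) * e ∧
    ∀ x : ℝ, 0 ≤ x → x ≤ 1 → 0 ≤ e.eval x := by
  induction s with
  | zero =>
    exact ⟨1, by rw [pow_one, bpoly_zero_mul]; ring, fun x _ _ => by norm_num⟩
  | succ s ih =>
    obtain ⟨e, he, hpos⟩ := ih
    refine ⟨e + C ((s+1+N).choose N : ℝ) * (1-X)^(s+1), ?_, fun x hx0 hx1 => ?_⟩
    · have : (1-X)^(s+1+1) * Bpoly (s+1) N = (1-X)^(s+1) * ((1-X) * Bpoly (s+1) N) := by ring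
      rw [this, bpoly_succ_mul, mul_sub, he]
      ring
    · simp only [eval_add, eval_mul, eval_C, eval_pow, eval_sub, eval_one, eval_X]
      have h1 : (0:ℝ) ≤ 1 - x := by linarith
      exact add_nonneg (hpos x hx0 hx1) (by positivity)

/-- the coefficient of the key product is a delta for low degrees -/
lemma key_coeff (s N m : ℕ) (hm : m ≤ N) :
    ((1-X)^(s+1) * Bpoly s N).coeff m = if m = 0 then 1 else 0 := by
  obtain ⟨e, he, -⟩ := bpoly_key s N
  rw [he, coeff_sub, coeff_X_pow_mul' e (N+1) m, if_neg (by omega)]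
  rcases eq_or_ne m 0 with rfl | h
  · simp
  · simp [h, coeff_one]

lemma key_eval_mem (s N : ℕ) {x : ℝ} (hx0 : 0 ≤ x) (hx1 : x ≤ 1) :
    0 ≤ ((1-X)^(s+1) * Bpoly s N).eval x ∧ ((1-X)^(s+1) * Bpoly s N).eval x ≤ 1 := by
  obtain ⟨e, he, hpos⟩ := bpoly_key s N
  constructor
  · rw [eval_mul, eval_pow, eval_sub, eval_one, eval_X]
    exact mul_nonneg (pow_nonneg (by linarith) _) (bpoly_eval_nonneg s N hx0)
  · rw [he, eval_sub, eval_one, eval_mul, eval_pow, eval_X]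
    have := hpos x hx0 hx1
    nlinarith [pow_nonneg hx0 (N+1)]

/-- The explicit (t+1, j)-Hermite polynomial, for j ≤ t. -/
lemma pexp_natDegree (t j : ℕ) (hj : j ≤ t) : (Pexp t j).natDegree ≤ 2*(t+1) - 1 := by
  rw [Pexp]
  calc (C (1/(j.factorial) : ℝ) * (X^j * ((1-X)^(t+1) * Bpoly t (t-j)))).natDegree
      ≤ _ := natDegree_C_mul_le _ _
    _ ≤ (X^j : ℝ[X]).natDegree + ((1-X)^(t+1) * Bpoly t (t-j)).natDegree := natDegree_mul_le
    _ ≤ (X^j : ℝ[X]).natDegree + (((1-X)^(t+1) : ℝ[X]).natDegree + (Bpoly t (t-j)).natDegree) :=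
        by gcongr; exact natDegree_mul_le
    _ ≤ j + ((t+1) + (t-j)) := by
        gcongr
        · exact (natDegree_X_pow j).le
        · exact (natDegree_pow _ _).le.trans (by
            simpa using Nat.mul_le_mul_left (t+1) ((natDegree_sub_le 1 X).trans (by simp)))
        · exact bpoly_natDegree_le _ _
    _ ≤ 2*(t+1) - 1 := by omega

lemma pexp_coeff (t j k : ℕ) (hj : j ≤ t) (hk : k ≤ t) :
    (Pexp t j).coeff k = if j = k then (1/(j.factorial):ℝ) else 0 := by
  rw [Pexp, coeff_C_mul, coeff_X_pow_mul' _ j k]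
  rcases le_or_gt j k with h | h
  · rw [if_pos h, key_coeff t (t-j) (k-j) (by omega)]
    rcases eq_or_ne j k with rfl | hne
    · simp
    · rw [if_neg (by omega), if_neg hne, mul_zero]
  · rw [if_neg (not_le.2 h), mul_zero, if_neg (by omega)]


/-- eval of iterated derivative at 0 -/
lemma iter_deriv_eval_zero (p : ℝ[X]) (k : ℕ) :
    (derivative^[k] p).eval 0 = (k.factorial : ℝ) * p.coeff k := by
  rw [← coeff_zero_eq_eval_zero, coeff_iterate_derivative, zero_add, nsmul_eq_mul,
    Nat.descFactorial_self]

/-- derivatives of (1-X)^n * g vanish at 1 below order n -/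
lemma iter_deriv_one_sub_eval_one (g : ℝ[X]) (n k : ℕ) (hk : k < n) :
    (derivative^[k] ((1-X)^n * g)).eval 1 = 0 := by
  suffices h : ∀ k < n, ∃ h : ℝ[X], derivative^[k] ((1-X)^n * g) = (1-X)^(n-k) * h by
    obtain ⟨h, hh⟩ := h k hk
    rw [hh, eval_mul, eval_pow, eval_sub, eval_one, eval_X, sub_self,
      zero_pow (by omega), zero_mul]
  intro k hk
  induction k with
  | zero => exact ⟨g, by simp⟩
  | succ k ih =>
    obtain ⟨h, hh⟩ := ih (by omega)
    refine ⟨-((n-k:ℕ):ℝ[X]) * h + (1-X) * derivative h, ?_⟩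
    rw [Function.iterate_succ_apply', hh]
    have hnk : n - k = (n - (k+1)) + 1 := by omega
    rw [derivative_mul, derivative_pow, hnk]
    have : derivative (1 - X : ℝ[X]) = -1 := by simp
    rw [this]
    push_cast
    simp only [map_add, map_one, Polynomial.C_eq_natCast]
    push_cast
    ring


/-- uniqueness: a polynomial of degree ≤ 2s-1 with all derivatives vanishing at 0 and 1 is 0 -/
lemma hermite_zero (s : ℕ) (hs : 1 ≤ s) (r : ℝ[X]) (hdeg : r.natDegree ≤ 2*s - 1)
    (h : ∀ k < s, (derivative^[k] r).eval 0 = 0 ∧ (derivative^[k] r).eval 1 = 0) : r = 0 := by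
  by_contra hr
  have m0 : s ≤ r.rootMultiplicity 0 := by
    have := lt_rootMultiplicity_of_isRoot_iterate_derivative (t := (0:ℝ)) (n := s-1) hr
      (fun m hm => (h m (by omega)).1)
    omega
  have m1 : s ≤ r.rootMultiplicity 1 := by
    have := lt_rootMultiplicity_of_isRoot_iterate_derivative (t := (1:ℝ)) (n := s-1) hr
      (fun m hm => (h m (by omega)).2)
    omega
  have d0 : (X - Polynomial.C (0:ℝ))^s ∣ r :=
    (pow_dvd_pow _ m0).trans (r.pow_rootMultiplicity_dvd 0)
  have d1 : (X - Polynomial.C (1:ℝ))^s ∣ r :=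
    (pow_dvd_pow _ m1).trans (r.pow_rootMultiplicity_dvd 1)
  have hcop : IsCoprime ((X - Polynomial.C (0:ℝ))^s) ((X - Polynomial.C (1:ℝ))^s) := by
    refine (IsCoprime.pow ?_)
    exact ⟨1, -1, by rw [map_zero, map_one]; ring⟩
  have hdvd : (X - Polynomial.C (0:ℝ))^s * (X - Polynomial.C (1:ℝ))^s ∣ r :=
    hcop.mul_dvd d0 d1
  have hdeg2 : 2*s ≤ r.natDegree := by
    have := natDegree_le_of_dvd hdvd hr
    rwa [natDegree_mul (pow_ne_zero _ (X_sub_C_ne_zero 0)) (pow_ne_zero _ (X_sub_C_ne_zero 1)), natDegree_pow, natDegree_pow,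
      natDegree_X_sub_C, natDegree_X_sub_C, mul_one, ← two_mul] at this
  omega

lemma hermite_unique (s j : ℕ) (hs : 1 ≤ s) (p p' : ℝ[X])
    (hp : IsHermitePoly s j p) (hp' : IsHermitePoly s j p') : p = p' := by
  have := hermite_zero s hs (p - p') ((natDegree_sub_le _ _).trans (by
    simp [hp.1, hp'.1]))
    (fun k hk => by
      have h1 := (hp.2 k hk); have h2 := (hp'.2 k hk)
      rw [iterate_derivative_sub, eval_sub, eval_sub, h1.1, h1.2, h2.1, h2.2]
      simp)
  exact sub_eq_zero.mp this


lemma pexp_isHermite (t j : ℕ) (hj : j ≤ t) : IsHermitePoly (t+1) j (Pexp t j) := by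
  refine ⟨pexp_natDegree t j hj, fun k hk => ⟨?_, ?_⟩⟩
  · rw [iter_deriv_eval_zero, pexp_coeff t j k hj (by omega)]
    rcases eq_or_ne j k with rfl | hne
    · rw [if_pos rfl, if_pos rfl, mul_one_div,
        div_self (by exact_mod_cast j.factorial_ne_zero)]
    · rw [if_neg hne, if_neg hne, mul_zero]
  · have : Pexp t j = (1-X)^(t+1) * (C (1/(j.factorial) : ℝ) * X^j * Bpoly t (t-j)) := by
      rw [Pexp]; ring
    rw [this, iter_deriv_one_sub_eval_one _ _ _ hk]

lemma pexp_eval_bounds (t j : ℕ) {x : ℝ} (hx0 : 0 ≤ x) (hx1 : x ≤ 1) :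
    0 ≤ (Pexp t j).eval x ∧ (Pexp t j).eval x ≤ x^j / (j.factorial : ℝ) := by
  obtain ⟨h0, h1⟩ := key_eval_mem t (t-j) hx0 hx1
  have hj : (0:ℝ) < j.factorial := by exact_mod_cast j.factorial_pos
  rw [Pexp, eval_mul, eval_mul, eval_C, eval_pow, eval_X]
  constructor
  · positivity
  · have hxj : (0:ℝ) ≤ x^j := pow_nonneg hx0 j
    have h2 : x ^ j * eval x ((1 - X) ^ (t + 1) * Bpoly t (t - j)) ≤ x ^ j := by
      nlinarith
    have h3 : (0:ℝ) ≤ 1/(j.factorial:ℝ) := by positivity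
    calc 1/(j.factorial:ℝ) * (x ^ j * eval x ((1 - X) ^ (t + 1) * Bpoly t (t - j)))
        ≤ 1/(j.factorial:ℝ) * x ^ j := mul_le_mul_of_nonneg_left h2 h3
      _ = x^j / (j.factorial:ℝ) := by ring

lemma dual_of_hermite (s j : ℕ) (p : ℝ[X]) (hp : IsHermitePoly s j p) :
    IsDualHermitePoly s j (C ((-1:ℝ)^j) * p.comp (1 - X)) := by
  constructor
  · calc (C ((-1:ℝ)^j) * p.comp (1 - X)).natDegree
        ≤ (p.comp (1 - X)).natDegree := natDegree_C_mul_le _ _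
      _ ≤ p.natDegree * (1 - X : ℝ[X]).natDegree := natDegree_comp_le
      _ ≤ p.natDegree * 1 := by
          gcongr; exact (natDegree_sub_le 1 X).trans (by simp)
      _ ≤ 2 * s - 1 := by rw [mul_one]; exact hp.1
  · intro k hk
    obtain ⟨h0, h1⟩ := hp.2 k hk
    rw [iterate_derivative_C_mul, iterate_derivative_comp_one_sub_X]
    constructor
    · simp only [eval_mul, eval_C, eval_pow, eval_neg, eval_one, eval_comp, eval_sub, eval_X,
        sub_zero, h1]
      simp
    · simp only [eval_mul, eval_C, eval_pow, eval_neg, eval_one, eval_comp, eval_sub, eval_X,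
        sub_self, h0]
      rcases eq_or_ne j k with rfl | hne
      · simp [← pow_add, pow_mul_comm', neg_one_pow_eq_one_iff_even, ← two_mul]
      · simp [hne]

lemma dual_zero_eval (j : ℕ) (p : ℝ[X]) {x : ℝ} :
    (C ((-1:ℝ)^j) * p.comp (1 - X)).eval x = (-1:ℝ)^j * p.eval (1 - x) := by
  simp [eval_comp]


/-- Jensen / Cauchy-Schwarz: square of integral over [0,1] is at most integral of square. -/
lemma sq_integral_le (g : ℝ → ℝ) (hg : Continuous g) :
    (∫ x in (0:ℝ)..1, g x)^2 ≤ ∫ x in (0:ℝ)..1, (g x)^2 := by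
  set c : ℝ := ∫ x in (0:ℝ)..1, g x with hc
  have hint : IntervalIntegrable g volume 0 1 := hg.intervalIntegrable 0 1
  have hint2 : IntervalIntegrable (fun x => (g x)^2) volume 0 1 :=
    (hg.pow 2).intervalIntegrable 0 1
  have key : (0:ℝ) ≤ ∫ x in (0:ℝ)..1, (g x - c)^2 :=
    intervalIntegral.integral_nonneg (by norm_num) (fun x _ => sq_nonneg _)
  have expand : ∫ x in (0:ℝ)..1, (g x - c)^2
      = (∫ x in (0:ℝ)..1, (g x)^2) - 2*c*c + c^2 := by
    have : ∀ x : ℝ, (g x - c)^2 = (g x)^2 - (2*c) * g x + c^2 := fun x => by ring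
    simp_rw [this]
    rw [intervalIntegral.integral_add ((hint2.sub ((hint.const_mul (2*c))))) (intervalIntegrable_const),
      intervalIntegral.integral_sub hint2 (hint.const_mul (2*c)),
      intervalIntegral.integral_const_mul, intervalIntegral.integral_const]
    simp [← hc]
  nlinarith [key, expand]

/-- FTC for iterated derivatives -/
lemma iter_ftc (s : ℕ) (f : ℝ → ℝ) (hf : ContDiff ℝ (s : ℕ∞) f) (j : ℕ) (hj : j < s) :
    iteratedDeriv j f 1 - iteratedDeriv j f 0 = ∫ x in (0:ℝ)..1, iteratedDeriv (j+1) f x := by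
  rw [iteratedDeriv_succ, intervalIntegral.integral_deriv_eq_sub]
  · intro x _
    exact (hf.differentiable_iteratedDeriv j (by exact_mod_cast hj)).differentiableAt
  · rw [← iteratedDeriv_succ]
    exact (hf.continuous_iteratedDeriv (j+1) (by exact_mod_cast hj)).intervalIntegrable 0 1


lemma Tb_nonneg (j : ℕ) : 0 ≤ Tb j := by
  rw [Tb]; split <;> positivity

lemma fact_sq_ge (j : ℕ) (hj : 2 ≤ j) : (2:ℝ)^j ≤ ((j.factorial : ℝ))^2 := by
  induction j, hj using Nat.le_induction with
  | base => norm_num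
  | succ j hj ih =>
    have hj2 : (2:ℝ) ≤ (j:ℝ) := by exact_mod_cast hj
    rw [pow_succ, Nat.factorial_succ]
    push_cast
    have hfp : (0:ℝ) < ((j.factorial:ℝ))^2 := by positivity
    have h2p : (0:ℝ) < 2^j := by positivity
    have hsq : (2:ℝ) ≤ ((j:ℝ)+1)^2 := by nlinarith
    calc (2:ℝ)^j * 2 ≤ 2^j * (((j:ℝ)+1)^2) := mul_le_mul_of_nonneg_left hsq h2p.le
      _ ≤ ((j.factorial:ℝ))^2 * (((j:ℝ)+1)^2) := mul_le_mul_of_nonneg_right ih (sq_nonneg _)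
      _ = (((j:ℝ)+1) * (j.factorial:ℝ))^2 := by ring

lemma Tb_le (j : ℕ) (hj : 2 ≤ j) : Tb j ≤ (5/3) * (1/2)^j := by
  rw [Tb, if_neg (by omega)]
  have hj2 : (2:ℝ) ≤ (j:ℝ) := by exact_mod_cast hj
  have hf : (1:ℝ) ≤ ((j.factorial:ℝ))^2 := by
    have h := j.factorial_pos
    have h' : (1:ℝ) ≤ (j.factorial:ℝ) := by exact_mod_cast h
    nlinarith
  have h2j : (2:ℝ)^j ≤ ((j.factorial:ℝ))^2 := fact_sq_ge j hj
  have hp : (0:ℝ) < 2^j := by positivity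
  have t1 : 2/((2*(j:ℝ)+1)*((j.factorial:ℝ))^2) ≤ 2/(5 * 2^j) := by
    apply div_le_div_of_nonneg_left (by norm_num) (by positivity)
    have h5 : (5:ℝ) ≤ 2*(j:ℝ)+1 := by linarith
    nlinarith
  have h4 : (4:ℝ) * 2^j ≤ 4^j := by
    have e : (4:ℝ)^j = 2^j * 2^j := by rw [← mul_pow]; norm_num
    have h42 : (4:ℝ) ≤ 2^j := by
      calc (4:ℝ) = 2^2 := by norm_num
        _ ≤ 2^j := pow_le_pow_right₀ (by norm_num) hj
    rw [e]; nlinarith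
  have t2 : 2/((4:ℝ)^j*((j.factorial:ℝ))^2) ≤ 2/(4 * 2^j) := by
    apply div_le_div_of_nonneg_left (by norm_num) (by positivity)
    have h4p : (0:ℝ) < 4^j := by positivity
    nlinarith
  have hhalf : ((1:ℝ)/2)^j = 1/2^j := by rw [div_pow, one_pow]
  have final : 2/(5*(2:ℝ)^j) + 2/(4*2^j) ≤ (5/3) * (1/2)^j := by
    have e : 2/(5*(2:ℝ)^j) + 2/(4*2^j) = (9/10) * (1/2^j) := by field_simp; ring
    rw [hhalf, e]
    have h0 : (0:ℝ) ≤ 1/2^j := by positivity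
    nlinarith
  calc 2/((2*(j:ℝ)+1)*((j.factorial:ℝ))^2) + 2/((4:ℝ)^j*((j.factorial:ℝ))^2)
      ≤ 2/(5*2^j) + 2/(4*2^j) := add_le_add t1 t2
    _ ≤ (5/3) * (1/2)^j := final

lemma Tb_sum_le (s : ℕ) : ∑ j ∈ Finset.range s, Tb j ≤ 4 := by
  have aux : ∀ m : ℕ, 2 ≤ m → ∑ j ∈ Finset.range m, Tb j ≤ 4 - (10/3) * (1/2)^m := by
    intro m hm
    induction m, hm using Nat.le_induction with
    | base =>
      rw [Finset.sum_range_succ, Finset.sum_range_one, Tb, Tb]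
      norm_num
    | succ m hm ih =>
      rw [Finset.sum_range_succ]
      have h1 := Tb_le m hm
      have : (4:ℝ) - (10/3)*(1/2)^m + (5/3)*(1/2)^m = 4 - (10/3)*(1/2)^(m+1) := by
        rw [pow_succ]; ring
      linarith
  match s with
  | 0 => simp
  | 1 => simpa [Tb] using by norm_num
  | (n+2) =>
    have := aux (n+2) (by omega)
    have hp : (0:ℝ) < (1/2:ℝ)^(n+2) := by positivity
    linarith


lemma dual_unique (s j : ℕ) (hs : 1 ≤ s) (q q' : ℝ[X])
    (hq : IsDualHermitePoly s j q) (hq' : IsDualHermitePoly s j q') : q = q' := by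
  have := hermite_zero s hs (q - q') ((natDegree_sub_le _ _).trans (by simp [hq.1, hq'.1]))
    (fun k hk => by
      have h1 := (hq.2 k hk); have h2 := (hq'.2 k hk)
      rw [iterate_derivative_sub, eval_sub, eval_sub, h1.1, h1.2, h2.1, h2.2]
      simp)
  exact sub_eq_zero.mp this

lemma cont_eval_sq (r : ℝ[X]) : Continuous fun x : ℝ => (r.eval x)^2 :=
  (r.continuous).pow 2

lemma diff_sq_integral (s j : ℕ) (hs : 1 ≤ s) (hj : j < s) (p q : ℝ[X])
    (hp : IsHermitePoly s j p) (hq : IsDualHermitePoly s j q) :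
    ∫ x in (0:ℝ)..1, ((p - q).eval x)^2 ≤ Tb j := by
  obtain ⟨t, rfl⟩ : ∃ t, s = t + 1 := ⟨s - 1, by omega⟩
  have hjt : j ≤ t := by omega
  have hpP : p = Pexp t j := hermite_unique _ j hs p _ hp (pexp_isHermite t j hjt)
  have hqQ : q = C ((-1:ℝ)^j) * (Pexp t j).comp (1 - X) :=
    dual_unique _ j hs q _ hq (dual_of_hermite _ j _ (pexp_isHermite t j hjt))
  subst hpP hqQ
  set D : ℝ[X] := Pexp t j - C ((-1:ℝ)^j) * (Pexp t j).comp (1 - X) with hD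
  have hDeval : ∀ x : ℝ, D.eval x = (Pexp t j).eval x - (-1:ℝ)^j * (Pexp t j).eval (1-x) := by
    intro x
    rw [hD, eval_sub, eval_mul, eval_C, eval_comp]
    simp
  have hf : (0:ℝ) < (j.factorial:ℝ) := by exact_mod_cast j.factorial_pos
  rcases Nat.eq_zero_or_pos j with rfl | hj1
  · -- j = 0
    have key : ∀ x ∈ Set.Icc (0:ℝ) 1, (D.eval x)^2 ≤ 1 := by
      rintro x ⟨hx0, hx1⟩
      obtain ⟨hP0, hP1⟩ := pexp_eval_bounds t 0 hx0 hx1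
      obtain ⟨hR0, hR1⟩ := pexp_eval_bounds t 0 (by linarith : (0:ℝ) ≤ 1-x)
        (by linarith : (1:ℝ)-x ≤ 1)
      rw [hDeval]
      simp only [pow_zero, one_mul, Nat.factorial_zero, Nat.cast_one, div_one] at *
      nlinarith
    calc ∫ x in (0:ℝ)..1, (D.eval x)^2 ≤ ∫ _x in (0:ℝ)..1, (1:ℝ) := by
          apply intervalIntegral.integral_mono_on (by norm_num)
            ((cont_eval_sq D).intervalIntegrable 0 1) intervalIntegrable_const
          exact key
      _ = 1 := by simp
      _ ≤ Tb 0 := by rw [Tb]; norm_num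
  · -- j ≥ 1
    have hne : j ≠ 0 := by omega
    set g : ℝ → ℝ := fun x => (x^(2*j) + (1-x)^(2*j) + 2*(1/4)^j) / ((j.factorial:ℝ))^2
      with hg
    have hgc1 : Continuous fun x : ℝ => x^(2*j) := continuous_pow _
    have hgc2 : Continuous fun x : ℝ => (1-x)^(2*j) :=
      ((continuous_const.sub continuous_id).pow _)
    have key : ∀ x ∈ Set.Icc (0:ℝ) 1, (D.eval x)^2 ≤ g x := by
      rintro x ⟨hx0, hx1⟩
      have h1x0 : (0:ℝ) ≤ 1 - x := by linarith
      obtain ⟨hP0, hP1⟩ := pexp_eval_bounds t j hx0 hx1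
      obtain ⟨hR0, hR1⟩ := pexp_eval_bounds t j h1x0 (by linarith : (1:ℝ)-x ≤ 1)
      rw [hDeval]
      set A := (Pexp t j).eval x
      set B := (Pexp t j).eval (1-x)
      have hAB : (A - (-1:ℝ)^j * B)^2 ≤ A^2 + 2*(A*B) + B^2 := by
        rcases Nat.even_or_odd j with hpar | hpar
        · rw [hpar.neg_one_pow]
          nlinarith [mul_nonneg hP0 hR0]
        · rw [hpar.neg_one_pow]
          nlinarith [mul_nonneg hP0 hR0]
      have hxj : x^j * (1-x)^j ≤ (1/4)^j := by
        rw [← mul_pow]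
        apply pow_le_pow_left₀ (by nlinarith) (by nlinarith [sq_nonneg (x - 1/2)])
      have hA2 : A^2 ≤ (x^j/(j.factorial:ℝ))^2 := by nlinarith
      have hB2 : B^2 ≤ ((1-x)^j/(j.factorial:ℝ))^2 := by nlinarith
      have hABm : A*B ≤ (x^j/(j.factorial:ℝ))*((1-x)^j/(j.factorial:ℝ)) := by
        apply mul_le_mul hP1 hR1 hR0 (by positivity)
      have e1 : (x^j/(j.factorial:ℝ))^2 = x^(2*j)/((j.factorial:ℝ))^2 := by
        rw [div_pow, ← pow_mul, mul_comm j 2]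
      have e2 : ((1-x)^j/(j.factorial:ℝ))^2 = (1-x)^(2*j)/((j.factorial:ℝ))^2 := by
        rw [div_pow, ← pow_mul, mul_comm j 2]
      have e3 : (x^j/(j.factorial:ℝ))*((1-x)^j/(j.factorial:ℝ))
          = (x^j*(1-x)^j)/((j.factorial:ℝ))^2 := by ring
      rw [hg]
      simp only
      rw [add_div, add_div]
      have hfp : (0:ℝ) < ((j.factorial:ℝ))^2 := by positivity
      have h2 : 2*(A*B) ≤ 2*(1/4)^j/((j.factorial:ℝ))^2 := by
        rw [e3] at hABm
        have hd : (x^j*(1-x)^j)/((j.factorial:ℝ))^2 ≤ (1/4)^j/((j.factorial:ℝ))^2 := by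
          gcongr
        calc 2*(A*B) ≤ 2*((x^j*(1-x)^j)/((j.factorial:ℝ))^2) := by linarith
          _ ≤ 2*((1/4)^j/((j.factorial:ℝ))^2) := by linarith
          _ = 2*(1/4)^j/((j.factorial:ℝ))^2 := by ring
      calc (A - (-1:ℝ)^j * B)^2 ≤ A^2 + 2*(A*B) + B^2 := hAB
        _ ≤ x^(2*j)/((j.factorial:ℝ))^2 + 2*(1/4)^j/((j.factorial:ℝ))^2
            + (1-x)^(2*j)/((j.factorial:ℝ))^2 := by
          rw [← e1, ← e2]
          exact add_le_add (add_le_add hA2 h2) hB2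
        _ = x ^ (2 * j) / (j.factorial:ℝ) ^ 2 + (1 - x) ^ (2 * j) / (j.factorial:ℝ) ^ 2
            + 2 * (1 / 4) ^ j / (j.factorial:ℝ) ^ 2 := by ring
    have hint : ∫ x in (0:ℝ)..1, g x = Tb j := by
      rw [hg]
      simp only
      rw [intervalIntegral.integral_div]
      rw [intervalIntegral.integral_add (f := fun x : ℝ => x^(2*j) + (1-x)^(2*j))
          (((hgc1.add hgc2)).intervalIntegrable 0 1)
        intervalIntegrable_const,
        intervalIntegral.integral_add (hgc1.intervalIntegrable 0 1)
          (hgc2.intervalIntegrable 0 1)]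
      rw [integral_pow]
      have h2 : ∫ x in (0:ℝ)..1, (1-x)^(2*j) = ∫ x in (0:ℝ)..1, x^(2*j) := by
        have := intervalIntegral.integral_comp_sub_left (a := (0:ℝ)) (b := 1)
          (fun t => t^(2*j)) 1
        simpa using this
      rw [h2, integral_pow, intervalIntegral.integral_const]
      rw [Tb, if_neg hne]
      have hj4 : (0:ℝ) < 4^j := by positivity
      have hjj : (0:ℝ) < 2*(j:ℝ)+1 := by positivity
      have hq4 : ((1:ℝ)/4)^j = 1/4^j := by rw [div_pow, one_pow]
      rw [hq4]
      push_cast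
      field_simp
      rw [zero_pow (by omega), smul_eq_mul]
      field_simp
      ring
    calc ∫ x in (0:ℝ)..1, (D.eval x)^2 ≤ ∫ x in (0:ℝ)..1, g x := by
          apply intervalIntegral.integral_mono_on (by norm_num)
            ((cont_eval_sq D).intervalIntegrable 0 1)
            (((((hgc1.add hgc2)).add continuous_const).div_const _).intervalIntegrable 0 1)
          exact key
      _ = Tb j := hint


end Aux

open Polynomial intervalIntegral in
theorem correction_poly_l2_bound (s : ℕ) (hs : 1 ≤ s) (f : ℝ → ℝ)
    (hf : ContDiff ℝ (s : ℕ∞) f)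
    (pj qj : ℕ → Polynomial ℝ)
    (hpj : ∀ j < s, IsHermitePoly s j (pj j))
    (hqj : ∀ j < s, IsDualHermitePoly s j (qj j))
    (pf : Polynomial ℝ)
    (hpf : pf = ∑ j ∈ Finset.range s,
        (iteratedDeriv j f 1 - iteratedDeriv j f 0) • (pj j - qj j)) :
    Real.sqrt (∫ x in (0:ℝ)..1, (pf.eval x) ^ 2) ≤
      2 * Real.sqrt (∑ k ∈ Finset.Icc 1 s, ∫ x in (0:ℝ)..1, (iteratedDeriv k f x) ^ 2) := by
  set c : ℕ → ℝ := fun j => iteratedDeriv j f 1 - iteratedDeriv j f 0 with hc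
  set R : ℝ := ∑ k ∈ Finset.Icc 1 s, ∫ x in (0:ℝ)..1, (iteratedDeriv k f x) ^ 2 with hR
  -- pointwise evaluation of pf
  have hpfeval : ∀ x : ℝ, pf.eval x = ∑ j ∈ Finset.range s, c j * (pj j - qj j).eval x := by
    intro x
    rw [hpf, eval_finset_sum]
    exact Finset.sum_congr rfl fun j _ => by rw [eval_smul, smul_eq_mul]
  -- pointwise Cauchy-Schwarz
  have hptCS : ∀ x : ℝ, (pf.eval x)^2 ≤
      (∑ j ∈ Finset.range s, (c j)^2) * (∑ j ∈ Finset.range s, ((pj j - qj j).eval x)^2) := by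
    intro x
    rw [hpfeval x]
    exact Finset.sum_mul_sq_le_sq_mul_sq _ _ _
  -- integrability
  have hcont : ∀ j, Continuous fun x : ℝ => ((pj j - qj j).eval x)^2 :=
    fun j => ((pj j - qj j).continuous).pow 2
  have hint1 : IntervalIntegrable (fun x => (pf.eval x)^2) volume 0 1 :=
    ((pf.continuous).pow 2).intervalIntegrable 0 1
  have hint2 : IntervalIntegrable (fun x =>
      (∑ j ∈ Finset.range s, (c j)^2) * (∑ j ∈ Finset.range s, ((pj j - qj j).eval x)^2))
      volume 0 1 := by
    apply Continuous.intervalIntegrable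
    exact continuous_const.mul (continuous_finset_sum _ fun j _ => hcont j)
  -- integral bound
  have hIbound : ∫ x in (0:ℝ)..1, (pf.eval x)^2 ≤
      (∑ j ∈ Finset.range s, (c j)^2) * 4 := by
    calc ∫ x in (0:ℝ)..1, (pf.eval x)^2
        ≤ ∫ x in (0:ℝ)..1, (∑ j ∈ Finset.range s, (c j)^2) *
            (∑ j ∈ Finset.range s, ((pj j - qj j).eval x)^2) := by
          apply intervalIntegral.integral_mono_on (by norm_num) hint1 hint2
          exact fun x _ => hptCS x
      _ = (∑ j ∈ Finset.range s, (c j)^2) *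
            ∫ x in (0:ℝ)..1, (∑ j ∈ Finset.range s, ((pj j - qj j).eval x)^2) := by
          rw [intervalIntegral.integral_const_mul]
      _ ≤ (∑ j ∈ Finset.range s, (c j)^2) * 4 := by
          apply mul_le_mul_of_nonneg_left ?_ (Finset.sum_nonneg fun j _ => sq_nonneg _)
          rw [intervalIntegral.integral_finset_sum
            (fun j _ => (hcont j).intervalIntegrable 0 1)]
          calc ∑ j ∈ Finset.range s, ∫ x in (0:ℝ)..1, ((pj j - qj j).eval x)^2
              ≤ ∑ j ∈ Finset.range s, Tb j := by
                apply Finset.sum_le_sum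
                intro j hj
                exact diff_sq_integral s j hs (Finset.mem_range.mp hj) _ _
                  (hpj j (Finset.mem_range.mp hj)) (hqj j (Finset.mem_range.mp hj))
            _ ≤ 4 := Tb_sum_le s
  -- bound on the coefficients
  have hcbound : ∑ j ∈ Finset.range s, (c j)^2 ≤ R := by
    have step : ∀ j < s, (c j)^2 ≤ ∫ x in (0:ℝ)..1, (iteratedDeriv (j+1) f x)^2 := by
      intro j hj
      rw [hc]
      simp only
      rw [iter_ftc s f hf j hj]
      exact sq_integral_le _ (hf.continuous_iteratedDeriv (j+1) (by exact_mod_cast hj))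
    rw [hR, ← Finset.Ico_add_one_right_eq_Icc, Finset.sum_Ico_eq_sum_range,
      show s + 1 - 1 = s from rfl]
    apply Finset.sum_le_sum
    intro j hj
    have := step j (Finset.mem_range.mp hj)
    simpa [add_comm 1 j] using this
  -- conclusion via sqrt
  have hfinal : ∫ x in (0:ℝ)..1, (pf.eval x)^2 ≤ 4 * R := by
    have : (∑ j ∈ Finset.range s, (c j)^2) * 4 ≤ 4 * R := by linarith
    linarith
  calc Real.sqrt (∫ x in (0:ℝ)..1, (pf.eval x)^2) ≤ Real.sqrt (4 * R) :=
        Real.sqrt_le_sqrt hfinal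
    _ = 2 * Real.sqrt R := by
        rw [Real.sqrt_mul (by norm_num) R, show (4:ℝ) = 2^2 by norm_num,
          Real.sqrt_sq (by norm_num)]
end

section
/- Let s ≥ 1 be an integer and let f : ℝ → ℝ be s-times continuously differentiable. For each 0 ≤ j ≤ s−1, let p_j be an (s,j)-Hermite polynomial and q_j an (s,j)-dual Hermite polynomial, define p_f := Σ_{j=0}^{s−1} (f^{(j)}(1) − f^{(j)}(0)) · (p_j − q_j), and define the periodicized function f̃ : [0,1] → ℝ by f̃(x) = f(2x) + p_f(2x) for 0 ≤ x ≤ 1/2 and f̃(x) = f(2x−1) for 1/2 < x ≤ 1. Then ∫₀¹ f̃(x)² dx ≤ 4 · Σ_{k=0}^{s} ∫₀¹ f^{(k)}(x)² dx. -/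
/-!
On the left half `f̃` is a rescaled copy of `f + p_f` and on the right half one of `f`, so
`∫ f̃² = (∫ (f + p_f)² + ∫ f²) / 2`, and `(f + p_f)² ≤ 4 f² + (4/3) p_f²`.

A polynomial of degree `< 2s` vanishing to order `s` at `0` and at `1` is zero, so the Hermite
polynomials are unique and `p_j = X^j/j! · (1 - X)^s · A` with
`A = ∑_{k < s-j} (s-1+k choose k) X^k`.
The Bezout identity `(1 - X)^s A + X^{s-j} B = 1`, with `A, B ≥ 0` on `[0, 1]`, gives
`0 ≤ p_j(x) ≤ x^j/j!`; reflecting `x ↦ 1 - x` gives `|q_j(x)| ≤ (1 - x)^j/j!`. Hence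
`∫ (p_j - q_j)² ≤ 4/(j!² (2j+1)) ≤ 4 · 3^{-j}`, and Cauchy–Schwarz gives `∫ p_f² ≤ 6 ∑ c_j²` for
`c_j = f^{(j)}(1) - f^{(j)}(0)`, while `c_j² ≤ ∫ (f^{(j+1)})²` by the fundamental theorem of
calculus and Cauchy–Schwarz again.
-/

open Polynomial Finset intervalIntegral
open scoped Nat

namespace Polynomial

theorem X_sub_C_pow_dvd_iff_iterate_derivative_eval_eq_zero {R : Type*} [CommRing R] [IsDomain R]
    [CharZero R] {p : R[X]} {a : R} {n : ℕ} :
    (X - C a) ^ n ∣ p ↔ ∀ k < n, (derivative^[k] p).eval a = 0 := by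
  rcases eq_or_ne p 0 with rfl | hp
  · simp
  rw [← le_rootMultiplicity_iff hp]
  cases n with
  | zero => simp
  | succ n =>
    rw [Nat.add_one_le_iff, lt_rootMultiplicity_iff_isRoot_iterate_derivative hp]
    simp [IsRoot]

theorem eq_zero_of_iterate_derivative_eval_eq_zero {K : Type*} [Field K] [CharZero K]
    {a b : K} (hab : a ≠ b) {s : ℕ} {d : K[X]} (hdeg : d.natDegree < 2 * s)
    (ha : ∀ k < s, (derivative^[k] d).eval a = 0) (hb : ∀ k < s, (derivative^[k] d).eval b = 0) :
    d = 0 := by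
  have hcop : IsCoprime ((X - C a) ^ s) ((X - C b) ^ s) :=
    (isCoprime_X_sub_C_of_isUnit_sub (sub_ne_zero.2 hab).isUnit).pow
  have hdvd := hcop.mul_dvd (X_sub_C_pow_dvd_iff_iterate_derivative_eval_eq_zero.2 ha)
    (X_sub_C_pow_dvd_iff_iterate_derivative_eval_eq_zero.2 hb)
  by_contra hd
  have := natDegree_le_of_dvd hdvd hd
  rw [← mul_pow, natDegree_pow, natDegree_mul (X_sub_C_ne_zero a) (X_sub_C_ne_zero b),
    natDegree_X_sub_C, natDegree_X_sub_C] at this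
  omega

end Polynomial

/-- The truncation of `(1 - X)^{-(t+1)} = ∑ₖ (t+k choose k) Xᵏ` to degree `m`. -/
noncomputable def binomialSeriesTrunc (t m : ℕ) : ℝ[X] :=
  ∑ k ∈ range (m + 1), C ((t + k).choose k : ℝ) * X ^ k

lemma binomialSeriesTrunc_succ_right (t m : ℕ) :
    binomialSeriesTrunc t (m + 1) =
      binomialSeriesTrunc t m + C ((t + (m + 1)).choose (m + 1) : ℝ) * X ^ (m + 1) :=
  sum_range_succ _ _

lemma one_sub_X_mul_binomialSeriesTrunc_succ (t m : ℕ) :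
    (1 - X) * binomialSeriesTrunc (t + 1) m =
      binomialSeriesTrunc t m - C ((t + 1 + m).choose m : ℝ) * X ^ (m + 1) := by
  induction m with
  | zero => simp [binomialSeriesTrunc]
  | succ m ih =>
    rw [binomialSeriesTrunc_succ_right, binomialSeriesTrunc_succ_right, mul_add, ih,
      show t + 1 + (m + 1) = t + (m + 1) + 1 by ring, Nat.choose_succ_succ',
      show t + (m + 1) = t + 1 + m by ring, Nat.cast_add, C_add]
    ring

lemma binomialSeriesTrunc_comp_one_sub_X_succ (t m : ℕ) :
    (binomialSeriesTrunc m (t + 1)).comp (1 - X) =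
      (binomialSeriesTrunc m t).comp (1 - X) +
        C ((t + 1 + m).choose m : ℝ) * (1 - X) ^ (t + 1) := by
  rw [binomialSeriesTrunc_succ_right, add_comp, add_comm m, Nat.choose_symm_add]
  simp

theorem one_sub_X_pow_mul_binomialSeriesTrunc_add (t m : ℕ) :
    (1 - X) ^ (t + 1) * binomialSeriesTrunc t m +
      X ^ (m + 1) * (binomialSeriesTrunc m t).comp (1 - X) = 1 := by
  induction t with
  | zero =>
    have hgeom := geom_sum_mul (X : ℝ[X]) (m + 1)
    simp only [binomialSeriesTrunc, zero_add, Nat.choose_self, Nat.cast_one, C_1, one_mul,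
      Nat.choose_zero_right, pow_one, range_one, sum_singleton, pow_zero, one_comp] at hgeom ⊢
    linear_combination -hgeom
  | succ t ih =>
    rw [pow_succ, mul_assoc, one_sub_X_mul_binomialSeriesTrunc_succ,
      binomialSeriesTrunc_comp_one_sub_X_succ]
    linear_combination ih

lemma binomialSeriesTrunc_eval_nonneg (t m : ℕ) {x : ℝ} (hx : 0 ≤ x) :
    0 ≤ (binomialSeriesTrunc t m).eval x := by
  simp only [binomialSeriesTrunc, eval_finsetSum, eval_mul, eval_pow, eval_C, eval_X]
  exact sum_nonneg fun k _ => by positivity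

lemma one_sub_pow_mul_eval_binomialSeriesTrunc_mem_Icc (t m : ℕ) {x : ℝ}
    (hx : x ∈ Set.Icc (0 : ℝ) 1) :
    (1 - x) ^ (t + 1) * (binomialSeriesTrunc t m).eval x ∈ Set.Icc (0 : ℝ) 1 := by
  have hid := congrArg (eval x) (one_sub_X_pow_mul_binomialSeriesTrunc_add t m)
  simp only [eval_add, eval_mul, eval_pow, eval_sub, eval_one, eval_X, eval_comp] at hid
  have h1x : 0 ≤ 1 - x := by linarith [hx.2]
  have hcof := mul_nonneg (pow_nonneg hx.1 (m + 1)) (binomialSeriesTrunc_eval_nonneg m t h1x)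
  exact ⟨mul_nonneg (pow_nonneg h1x _) (binomialSeriesTrunc_eval_nonneg t m hx.1), by linarith⟩

noncomputable def hermiteBasis (t j : ℕ) : ℝ[X] :=
  C (j ! : ℝ)⁻¹ * X ^ j * ((1 - X) ^ (t + 1) * binomialSeriesTrunc t (t - j))

theorem abs_eval_hermiteBasis_le (t j : ℕ) {x : ℝ} (hx : x ∈ Set.Icc (0 : ℝ) 1) :
    |(hermiteBasis t j).eval x| ≤ x ^ j / j ! := by
  obtain ⟨h0, h1⟩ := one_sub_pow_mul_eval_binomialSeriesTrunc_mem_Icc t (t - j) hx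
  have hx0 := hx.1
  simp only [hermiteBasis, eval_mul, eval_pow, eval_C, eval_X, eval_sub, eval_one]
  rw [abs_of_nonneg (by positivity), inv_mul_eq_div]
  exact mul_le_of_le_one_right (by positivity) h1

lemma natDegree_binomialSeriesTrunc_le (t m : ℕ) : (binomialSeriesTrunc t m).natDegree ≤ m :=
  natDegree_sum_le_of_forall_le _ _ fun k hk =>
    natDegree_C_mul_X_pow_le _ k |>.trans (Nat.lt_add_one_iff.1 (mem_range.1 hk))

lemma natDegree_hermiteBasis_le {t j : ℕ} (hj : j ≤ t) :
    (hermiteBasis t j).natDegree ≤ 2 * (t + 1) - 1 := by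
  have h1X : (1 - X : ℝ[X]).natDegree ≤ 1 := (natDegree_sub_le _ _).trans (by simp)
  refine (natDegree_mul_le_of_le (natDegree_C_mul_le _ _ |>.trans (natDegree_X_pow_le j))
    (natDegree_mul_le_of_le (natDegree_pow_le_of_le (t + 1) h1X)
      (natDegree_binomialSeriesTrunc_le t (t - j)))).trans ?_
  omega

lemma X_pow_dvd_sub_hermiteBasis {t j : ℕ} (hj : j ≤ t) :
    X ^ (t + 1) ∣ C (j ! : ℝ)⁻¹ * X ^ j - hermiteBasis t j := by
  refine ⟨C (j ! : ℝ)⁻¹ * (binomialSeriesTrunc (t - j) t).comp (1 - X), ?_⟩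
  have hid := one_sub_X_pow_mul_binomialSeriesTrunc_add t (t - j)
  rw [show (X : ℝ[X]) ^ (t + 1) = X ^ j * X ^ (t - j + 1) by rw [← pow_add]; congr 1; omega,
    hermiteBasis]
  linear_combination -(C (j ! : ℝ)⁻¹ * X ^ j) * hid

lemma X_sub_one_pow_dvd_hermiteBasis (t j : ℕ) : (X - C 1) ^ (t + 1) ∣ hermiteBasis t j :=
  ⟨(-1) ^ (t + 1) * (C (j ! : ℝ)⁻¹ * X ^ j * binomialSeriesTrunc t (t - j)), by
    rw [hermiteBasis, show (1 - X : ℝ[X]) = -(X - C 1) by simp, neg_pow]; ring⟩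

lemma eval_zero_iterate_derivative_monomial (j k : ℕ) :
    (derivative^[k] (C (j ! : ℝ)⁻¹ * X ^ j)).eval 0 = if j = k then 1 else 0 := by
  rw [iterate_derivative_C_mul, iterate_derivative_X_pow_eq_smul]
  simp only [eval_mul, eval_C, eval_smul, eval_pow, eval_X, smul_eq_mul]
  rcases lt_trichotomy j k with h | rfl | h
  · simp [Nat.descFactorial_eq_zero_iff_lt.mpr h, h.ne]
  · simp [Nat.descFactorial_self, Nat.factorial_ne_zero]
  · simp [zero_pow (Nat.sub_ne_zero_of_lt h), h.ne']

theorem isHermitePoly_hermiteBasis {t j : ℕ} (hj : j ≤ t) :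
    IsHermitePoly (t + 1) j (hermiteBasis t j) := by
  refine ⟨natDegree_hermiteBasis_le hj, fun k hk => ⟨?_, ?_⟩⟩
  · have h0 := (X_sub_C_pow_dvd_iff_iterate_derivative_eval_eq_zero (a := (0 : ℝ))).1
      (by simpa using X_pow_dvd_sub_hermiteBasis hj) k hk
    rw [iterate_derivative_sub, eval_sub, sub_eq_zero, eval_zero_iterate_derivative_monomial] at h0
    exact h0.symm
  · exact X_sub_C_pow_dvd_iff_iterate_derivative_eval_eq_zero.1
      (X_sub_one_pow_dvd_hermiteBasis t j) k hk

theorem IsHermitePoly.eq_hermiteBasis {s j : ℕ} {p : ℝ[X]} (h : IsHermitePoly s j p)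
    (hj : j < s) : p = hermiteBasis (s - 1) j := by
  obtain ⟨t, rfl⟩ : ∃ t, s = t + 1 := ⟨s - 1, by omega⟩
  obtain ⟨hdeg, hjet⟩ := h
  obtain ⟨hdeg', hjet'⟩ := isHermitePoly_hermiteBasis (Nat.lt_add_one_iff.1 hj)
  rw [Nat.add_sub_cancel, ← sub_eq_zero]
  refine eq_zero_of_iterate_derivative_eval_eq_zero (s := t + 1) zero_ne_one
    ((natDegree_sub_le _ _).trans_lt (by omega)) (fun k hk => ?_) (fun k hk => ?_)
  · rw [iterate_derivative_sub, eval_sub, (hjet k hk).1, (hjet' k hk).1, sub_self]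
  · rw [iterate_derivative_sub, eval_sub, (hjet k hk).2, (hjet' k hk).2, sub_self]

theorem IsHermitePoly.abs_eval_le {s j : ℕ} {p : ℝ[X]} (h : IsHermitePoly s j p) (hj : j < s)
    {x : ℝ} (hx : x ∈ Set.Icc (0 : ℝ) 1) : |p.eval x| ≤ x ^ j / j ! := by
  rw [h.eq_hermiteBasis hj]
  exact abs_eval_hermiteBasis_le _ _ hx

theorem IsDualHermitePoly.isHermitePoly_reflect {s j : ℕ} {q : ℝ[X]}
    (h : IsDualHermitePoly s j q) : IsHermitePoly s j (C ((-1) ^ j) * q.comp (1 - X)) := by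
  obtain ⟨hdeg, hjet⟩ := h
  have hder : ∀ k x, (derivative^[k] (C ((-1 : ℝ) ^ j) * q.comp (1 - X))).eval x =
      (-1) ^ j * ((-1) ^ k * (derivative^[k] q).eval (1 - x)) := by
    intro k x
    rw [iterate_derivative_C_mul, iterate_derivative_comp_one_sub_X]
    simp [eval_comp]
  have h1X : (1 - X : ℝ[X]).natDegree ≤ 1 := (natDegree_sub_le _ _).trans (by simp)
  refine ⟨?_, fun k hk => ⟨?_, ?_⟩⟩
  · refine (natDegree_C_mul_le _ _).trans (natDegree_comp_le.trans ?_)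
    nlinarith
  · rw [hder, sub_zero, (hjet k hk).2]
    split_ifs with hjk
    · simp [hjk, ← pow_add]
    · simp
  · rw [hder, sub_self, (hjet k hk).1]
    simp

theorem IsDualHermitePoly.abs_eval_le {s j : ℕ} {q : ℝ[X]} (h : IsDualHermitePoly s j q)
    (hj : j < s) {x : ℝ} (hx : x ∈ Set.Icc (0 : ℝ) 1) : |q.eval x| ≤ (1 - x) ^ j / j ! := by
  have := h.isHermitePoly_reflect.abs_eval_le hj (x := 1 - x)
    ⟨by linarith [hx.2], by linarith [hx.1]⟩
  simpa [eval_comp, abs_mul] using this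

theorem sq_integral_le_mul_integral_sq {g : ℝ → ℝ} {a b : ℝ} (hab : a ≤ b)
    (hg : IntervalIntegrable g MeasureTheory.volume a b)
    (hg2 : IntervalIntegrable (fun x => g x ^ 2) MeasureTheory.volume a b) :
    (∫ x in a..b, g x) ^ 2 ≤ (b - a) * ∫ x in a..b, g x ^ 2 := by
  have hquad : ∀ t : ℝ,
      0 ≤ (b - a) * (t * t) + (-2 * ∫ x in a..b, g x) * t + ∫ x in a..b, g x ^ 2 := by
    intro t
    have hexpand : ∫ x in a..b, (t - g x) ^ 2 =
        (b - a) * (t * t) + (-2 * ∫ x in a..b, g x) * t + ∫ x in a..b, g x ^ 2 := by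
      simp_rw [show ∀ x, (t - g x) ^ 2 = (t * t - 2 * t * g x) + g x ^ 2 from fun x => by ring]
      rw [integral_add (intervalIntegrable_const.sub (hg.const_mul _)) hg2,
        integral_sub intervalIntegrable_const (hg.const_mul _), intervalIntegral.integral_const,
        integral_const_mul, smul_eq_mul]
      ring
    rw [← hexpand]
    exact integral_nonneg hab fun x _ => sq_nonneg _
  have := discrim_le_zero hquad
  rw [discrim] at this
  linarith

theorem sq_sub_iteratedDeriv_le {n : ℕ} {f : ℝ → ℝ} (hf : ContDiff ℝ n f) {j : ℕ} (hj : j < n)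
    {a b : ℝ} (hab : a ≤ b) :
    (iteratedDeriv j f b - iteratedDeriv j f a) ^ 2 ≤
      (b - a) * ∫ x in a..b, iteratedDeriv (j + 1) f x ^ 2 := by
  have hcont : Continuous (iteratedDeriv (j + 1) f) :=
    hf.continuous_iteratedDeriv (j + 1) (by exact_mod_cast hj)
  have hdiff : Differentiable ℝ (iteratedDeriv j f) :=
    hf.differentiable_iteratedDeriv j (by exact_mod_cast hj)
  have hderiv : ∀ x, HasDerivAt (iteratedDeriv j f) (iteratedDeriv (j + 1) f x) x := fun x => by
    rw [iteratedDeriv_succ]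
    exact (hdiff x).hasDerivAt
  rw [← integral_eq_sub_of_hasDerivAt (fun x _ => hderiv x) (hcont.intervalIntegrable _ _)]
  exact sq_integral_le_mul_integral_sq hab (hcont.intervalIntegrable _ _)
    ((hcont.pow 2).intervalIntegrable _ _)

theorem integral_sq_add_le {u v : ℝ → ℝ} (hu : Continuous u) (hv : Continuous v) {a b : ℝ}
    (hab : a ≤ b) :
    ∫ x in a..b, (u x + v x) ^ 2 ≤
      4 * (∫ x in a..b, u x ^ 2) + 4 / 3 * ∫ x in a..b, v x ^ 2 := by
  calc ∫ x in a..b, (u x + v x) ^ 2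
      ≤ ∫ x in a..b, 4 * u x ^ 2 + 4 / 3 * v x ^ 2 :=
        integral_mono_on hab (Continuous.intervalIntegrable (by fun_prop) _ _)
          (Continuous.intervalIntegrable (by fun_prop) _ _)
          fun x _ => by nlinarith [sq_nonneg (3 * u x - v x)]
    _ = _ := by
        rw [integral_add (Continuous.intervalIntegrable (by fun_prop) _ _)
          (Continuous.intervalIntegrable (by fun_prop) _ _), integral_const_mul,
          integral_const_mul]

theorem integral_sq_sum_mul_le {ι : Type*} (S : Finset ι) (c : ι → ℝ) {u : ι → ℝ → ℝ}
    (hu : ∀ i ∈ S, Continuous (u i)) {a b : ℝ} (hab : a ≤ b) :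
    ∫ x in a..b, (∑ i ∈ S, c i * u i x) ^ 2 ≤
      (∑ i ∈ S, c i ^ 2) * ∑ i ∈ S, ∫ x in a..b, u i x ^ 2 := by
  have hu2 : ∀ i ∈ S, IntervalIntegrable (fun x => u i x ^ 2) MeasureTheory.volume a b :=
    fun i hi => ((hu i hi).pow 2).intervalIntegrable _ _
  rw [← integral_finsetSum hu2, ← integral_const_mul]
  refine integral_mono_on hab ?_ ?_ fun x _ => sum_mul_sq_le_sq_mul_sq S c (u · x)
  · exact ((continuous_finsetSum S fun i hi => continuous_const.mul (hu i hi)).pow 2)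
      |>.intervalIntegrable _ _
  · exact (continuous_const.mul (continuous_finsetSum S fun i hi => (hu i hi).pow 2))
      |>.intervalIntegrable _ _

theorem three_pow_le_factorial_sq_mul (j : ℕ) : 3 ^ j ≤ j ! ^ 2 * (2 * j + 1) := by
  induction j with
  | zero => simp
  | succ j ih =>
    rw [pow_succ, Nat.factorial_succ]
    have : 3 * (2 * j + 1) ≤ (j + 1) ^ 2 * (2 * (j + 1) + 1) := by nlinarith
    nlinarith [Nat.zero_le (j ! ^ 2)]

theorem sum_range_four_div_factorial_sq_mul_le (s : ℕ) :
    ∑ j ∈ range s, 4 / ((j ! : ℝ) ^ 2 * (2 * j + 1)) ≤ 6 := by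
  calc ∑ j ∈ range s, 4 / ((j ! : ℝ) ^ 2 * (2 * j + 1))
      ≤ ∑ j ∈ range s, 4 * (1 / 3 : ℝ) ^ j := by
        refine sum_le_sum fun j _ => ?_
        rw [one_div_pow, ← div_eq_mul_one_div]
        gcongr
        exact_mod_cast three_pow_le_factorial_sq_mul j
    _ ≤ 4 * ((1 / 3) ^ 0 / (1 - 1 / 3)) := by
        rw [← mul_sum, ← Nat.Ico_zero_eq_range]
        gcongr
        exact geom_sum_Ico_le_of_lt_one (by norm_num) (by norm_num)
    _ = 6 := by norm_num

theorem IsHermitePoly.integral_sq_eval_sub_le {s j : ℕ} {p q : ℝ[X]} (hp : IsHermitePoly s j p)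
    (hq : IsDualHermitePoly s j q) (hj : j < s) :
    ∫ x in (0 : ℝ)..1, (p - q).eval x ^ 2 ≤ 4 / ((j ! : ℝ) ^ 2 * (2 * j + 1)) := by
  have hpt : ∀ x ∈ Set.Icc (0 : ℝ) 1,
      (p - q).eval x ^ 2 ≤ 2 / (j ! : ℝ) ^ 2 * (x ^ (2 * j) + (1 - x) ^ (2 * j)) := by
    intro x hx
    obtain ⟨hp₁, hp₂⟩ := abs_le.1 (hp.abs_eval_le hj hx)
    obtain ⟨hq₁, hq₂⟩ := abs_le.1 (hq.abs_eval_le hj hx)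
    have hpx := sq_le_sq' hp₁ hp₂
    have hqx := sq_le_sq' hq₁ hq₂
    rw [eval_sub]
    calc (p.eval x - q.eval x) ^ 2 ≤ 2 * p.eval x ^ 2 + 2 * q.eval x ^ 2 := by
          nlinarith [sq_nonneg (p.eval x + q.eval x)]
      _ ≤ 2 * (x ^ j / j !) ^ 2 + 2 * ((1 - x) ^ j / j !) ^ 2 := by gcongr
      _ = 2 / (j ! : ℝ) ^ 2 * (x ^ (2 * j) + (1 - x) ^ (2 * j)) := by ring
  have hint : ∫ x in (0 : ℝ)..1, x ^ (2 * j) + (1 - x) ^ (2 * j) = 2 / (2 * j + 1) := by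
    rw [integral_add (Continuous.intervalIntegrable (by fun_prop) _ _)
      (Continuous.intervalIntegrable (by fun_prop) _ _),
      integral_comp_sub_left (fun x => x ^ (2 * j)), integral_pow]
    norm_num
    ring
  calc ∫ x in (0 : ℝ)..1, (p - q).eval x ^ 2
      ≤ ∫ x in (0 : ℝ)..1, 2 / (j ! : ℝ) ^ 2 * (x ^ (2 * j) + (1 - x) ^ (2 * j)) :=
        integral_mono_on zero_le_one (((p - q).continuous.pow 2).intervalIntegrable _ _)
          (Continuous.intervalIntegrable (by fun_prop) _ _) hpt
    _ = 4 / ((j ! : ℝ) ^ 2 * (2 * j + 1)) := by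
        rw [integral_const_mul, hint]
        field_simp; ring

theorem integral_sq_eval_sum_smul_le {s : ℕ} {p q : ℕ → ℝ[X]}
    (hp : ∀ j < s, IsHermitePoly s j (p j)) (hq : ∀ j < s, IsDualHermitePoly s j (q j))
    (c : ℕ → ℝ) :
    ∫ x in (0 : ℝ)..1, (∑ j ∈ range s, c j • (p j - q j)).eval x ^ 2 ≤
      6 * ∑ j ∈ range s, c j ^ 2 := by
  simp only [eval_finsetSum, eval_smul, smul_eq_mul]
  calc _ ≤ (∑ j ∈ range s, c j ^ 2) * ∑ j ∈ range s, ∫ x in (0 : ℝ)..1, (p j - q j).eval x ^ 2 :=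
        integral_sq_sum_mul_le _ c (fun j _ => (p j - q j).continuous) zero_le_one
    _ ≤ (∑ j ∈ range s, c j ^ 2) * 6 := by
        refine mul_le_mul_of_nonneg_left ?_ (sum_nonneg fun j _ => sq_nonneg _)
        refine (sum_le_sum fun j hj => ?_).trans (sum_range_four_div_factorial_sq_mul_le s)
        exact (hp j (mem_range.1 hj)).integral_sq_eval_sub_le (hq j (mem_range.1 hj))
          (mem_range.1 hj)
    _ = _ := mul_comm _ _

theorem integral_eq_of_eq_ite_half {F g h : ℝ → ℝ}
    (hg : IntervalIntegrable g MeasureTheory.volume 0 1)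
    (hh : IntervalIntegrable h MeasureTheory.volume 0 1)
    (hF : ∀ x ∈ Set.Icc (0 : ℝ) 1, F x = if x ≤ 1 / 2 then g (2 * x) else h (2 * x - 1)) :
    ∫ x in (0 : ℝ)..1, F x = (∫ x in (0 : ℝ)..1, g x) / 2 + (∫ x in (0 : ℝ)..1, h x) / 2 := by
  have hleft : Set.EqOn F (fun x => g (2 * x)) (Set.uIcc 0 (1 / 2)) := by
    intro x hx
    rw [Set.uIcc_of_le (by norm_num)] at hx
    rw [hF x ⟨hx.1, hx.2.trans (by norm_num)⟩, if_pos hx.2]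
  have hright : Set.EqOn F (fun x => h (2 * x - 1)) (Set.uIoc (1 / 2) 1) := by
    intro x hx
    rw [Set.uIoc_of_le (by norm_num)] at hx
    rw [hF x ⟨by linarith [hx.1], hx.2⟩, if_neg (not_le.2 hx.1)]
  have hg' : IntervalIntegrable (fun x => g (2 * x)) MeasureTheory.volume 0 (1 / 2) := by
    simpa using hg.comp_mul_left (c := 2)
  have hh' : IntervalIntegrable (fun x => h (2 * x - 1)) MeasureTheory.volume (1 / 2) 1 := by
    have := (hh.comp_sub_right 1).comp_mul_left (c := 2)
    norm_num at this
    exact this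
  rw [← integral_add_adjacent_intervals (b := 1 / 2)
      (hg'.congr_uIoo (hleft.symm.mono Set.Ioo_subset_Icc_self))
      (hh'.congr (hright.symm)),
    integral_congr hleft, integral_congr_ae (MeasureTheory.ae_of_all _ fun x hx => hright hx),
    integral_comp_mul_left _ two_ne_zero, integral_comp_mul_sub _ two_ne_zero]
  norm_num [div_eq_inv_mul]

open MeasureTheory Finset

theorem periodicization_l2_bound_general (s : ℕ) (f : ℝ → ℝ)
    (hf : ContDiff ℝ (s : ℕ∞) f)
    (pj qj : ℕ → Polynomial ℝ)
    (hpj : ∀ j < s, IsHermitePoly s j (pj j))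
    (hqj : ∀ j < s, IsDualHermitePoly s j (qj j))
    (pf : Polynomial ℝ)
    (hpf : pf = ∑ j ∈ Finset.range s,
        (iteratedDeriv j f 1 - iteratedDeriv j f 0) • (pj j - qj j))
    (ftilde : ℝ → ℝ)
    (hftilde : ∀ x ∈ Set.Icc (0:ℝ) 1,
        ftilde x = if x ≤ 1 / 2 then f (2 * x) + pf.eval (2 * x) else f (2 * x - 1)) :
    (∫ x in (0:ℝ)..1, (ftilde x) ^ 2) ≤
      4 * ∑ k ∈ Finset.range (s + 1), ∫ x in (0:ℝ)..1, (iteratedDeriv k f x) ^ 2 := by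
  have hP : ∫ x in (0 : ℝ)..1, pf.eval x ^ 2 ≤
      6 * ∑ j ∈ range s, ∫ x in (0 : ℝ)..1, iteratedDeriv (j + 1) f x ^ 2 := by
    rw [hpf]
    refine (integral_sq_eval_sum_smul_le hpj hqj _).trans ?_
    gcongr with j hj
    simpa using sq_sub_iteratedDeriv_le hf (mem_range.1 hj) zero_le_one
  have hfP := integral_sq_add_le hf.continuous pf.continuous zero_le_one
  have hf0 : 0 ≤ ∫ x in (0 : ℝ)..1, f x ^ 2 := integral_nonneg zero_le_one fun x _ => sq_nonneg _
  rw [integral_eq_of_eq_ite_half (g := fun x => (f x + pf.eval x) ^ 2) (h := fun x => f x ^ 2)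
    (Continuous.intervalIntegrable (by fun_prop) _ _)
    (Continuous.intervalIntegrable (by fun_prop) _ _)
    fun x hx => by rw [hftilde x hx]; split_ifs <;> rfl,
    sum_range_succ', iteratedDeriv_zero]
  linarith

/-- the periodicization `f̃` of `f` (gluing `f + p_f` and `f` on the two
halves of `[0,1]`) has squared `L²(0,1)` norm at most `4` times the squared `H^s(0,1)`
norm of `f`. -/
theorem periodicization_l2_bound (s : ℕ) (hs : 1 ≤ s) (f : ℝ → ℝ)
    (hf : ContDiff ℝ (s : ℕ∞) f)
    (pj qj : ℕ → Polynomial ℝ)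
    (hpj : ∀ j < s, IsHermitePoly s j (pj j))
    (hqj : ∀ j < s, IsDualHermitePoly s j (qj j))
    (pf : Polynomial ℝ)
    (hpf : pf = ∑ j ∈ Finset.range s,
        (iteratedDeriv j f 1 - iteratedDeriv j f 0) • (pj j - qj j))
    (ftilde : ℝ → ℝ)
    (hftilde : ∀ x ∈ Set.Icc (0:ℝ) 1,
        ftilde x = if x ≤ 1 / 2 then f (2 * x) + pf.eval (2 * x) else f (2 * x - 1)) :
    (∫ x in (0:ℝ)..1, (ftilde x) ^ 2) ≤
      4 * ∑ k ∈ Finset.range (s + 1), ∫ x in (0:ℝ)..1, (iteratedDeriv k f x) ^ 2 :=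
  periodicization_l2_bound_general s f hf pj qj hpj hqj pf hpf ftilde hftilde
end

section
/- Let ℓ ≥ 0 be an integer, let n₀, n₁, …, n_{ℓ+1} be positive integers, and for each i = 1, …, ℓ+1 let W_i be a real n_i × n_{i−1} matrix. Let C ⊆ ℝ^{n₀} be a nonempty compact set. Then there exist vectors b_i ∈ ℝ^{n_i} for i = 1, …, ℓ+1 such that, defining the layers L_i : ℝ^{n_{i−1}} → ℝ^{n_i} by L_i(x) := σ(W_i x + b_i), where σ(t) = max(t, 0) is the ReLU function applied entrywise, one has W_{ℓ+1} (L_ℓ ∘ ⋯ ∘ L_1)(c) + b_{ℓ+1} = W_{ℓ+1} W_ℓ ⋯ W_1 c for every c ∈ C. In other words, a purely linear network (no activations and no biases) can be exactly realized on any compact set by a ReLU network with the same weight matrices and suitably chosen biases. -/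
/-- The forward pass through `i` ReLU layers: `reluLayers n W b i c = (L_i ∘ ⋯ ∘ L_1)(c)`,
where `L_k(x) = σ(W_k x + b_k)` and `σ(t) = max(t,0)` acts entrywise. -/
def reluLayers (n : ℕ → ℕ) (W : ∀ i : ℕ, Matrix (Fin (n (i + 1))) (Fin (n i)) ℝ)
    (b : ∀ i : ℕ, Fin (n (i + 1)) → ℝ) : ∀ i : ℕ, (Fin (n 0) → ℝ) → (Fin (n i) → ℝ)
  | 0 => fun c => c
  | i + 1 => fun c j => max ((W i).mulVec (reluLayers n W b i c) j + b i j) 0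

/-- The purely linear forward pass: `linLayers n W i c = W_i ⋯ W_1 c` (no activations,
no biases). -/
def linLayers (n : ℕ → ℕ) (W : ∀ i : ℕ, Matrix (Fin (n (i + 1))) (Fin (n i)) ℝ) :
    ∀ i : ℕ, (Fin (n 0) → ℝ) → (Fin (n i) → ℝ)
  | 0 => fun c => c
  | i + 1 => fun c => (W i).mulVec (linLayers n W i c)

/-! Add to the `i`-th layer of the linear network a constant shift `t i` that makes it
nonnegative on `C`, which compactness allows. Then every ReLU acts as the identity, the bias
`t (i + 1) - W i t i` passes the shift on from one layer to the next, and the last bias removes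
it again. -/

open Matrix

lemma IsCompact.exists_add_nonneg {X ι : Type*} [TopologicalSpace X] [Fintype ι]
    {C : Set X} (hC : IsCompact C) {f : X → ι → ℝ} (hf : Continuous f) :
    ∃ t : ι → ℝ, ∀ c ∈ C, 0 ≤ f c + t := by
  obtain ⟨a, ha⟩ := (hC.image hf).isBounded.bddBelow
  exact ⟨-a, fun c hc => by simpa [← sub_eq_add_neg] using ha ⟨c, hc, rfl⟩⟩

section Layers

variable {n : ℕ → ℕ} (W : ∀ i : ℕ, Matrix (Fin (n (i + 1))) (Fin (n i)) ℝ)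

theorem continuous_linLayers (i : ℕ) : Continuous (linLayers n W i) := by
  induction i with
  | zero => exact continuous_id
  | succ k ih => exact continuous_const.matrix_mulVec ih

def shiftBias (t : ∀ i, Fin (n i) → ℝ) (i : ℕ) : Fin (n (i + 1)) → ℝ :=
  t (i + 1) - W i *ᵥ t i

theorem reluLayers_shiftBias {t : ∀ i, Fin (n i) → ℝ} (ht₀ : t 0 = 0) {ℓ : ℕ}
    {c : Fin (n 0) → ℝ} (hnonneg : ∀ k < ℓ, 0 ≤ linLayers n W (k + 1) c + t (k + 1)) :
    ∀ i ≤ ℓ, reluLayers n W (shiftBias W t) i c = linLayers n W i c + t i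
  | 0, _ => by simp [reluLayers, linLayers, ht₀]
  | k + 1, hk => by
    have hpre : W k *ᵥ reluLayers n W (shiftBias W t) k c + shiftBias W t k =
        linLayers n W (k + 1) c + t (k + 1) := by
      rw [reluLayers_shiftBias ht₀ hnonneg k (by omega), mulVec_add, shiftBias]
      simp only [linLayers]
      abel
    exact (congrArg (max · 0) hpre).trans (sup_eq_left.2 (hnonneg k hk))

theorem mulVec_reluLayers_add_shiftBias {t : ∀ i, Fin (n i) → ℝ} (ht₀ : t 0 = 0) {ℓ : ℕ}
    (htℓ : t (ℓ + 1) = 0) {c : Fin (n 0) → ℝ}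
    (hnonneg : ∀ k < ℓ, 0 ≤ linLayers n W (k + 1) c + t (k + 1)) :
    W ℓ *ᵥ reluLayers n W (shiftBias W t) ℓ c + shiftBias W t ℓ = linLayers n W (ℓ + 1) c := by
  rw [reluLayers_shiftBias W ht₀ hnonneg ℓ le_rfl, mulVec_add, shiftBias, htℓ]
  simp only [linLayers]
  abel

end Layers

theorem relu_network_realizes_linear_on_compact_general (ℓ : ℕ) (n : ℕ → ℕ)
    (W : ∀ i : ℕ, Matrix (Fin (n (i + 1))) (Fin (n i)) ℝ)
    (C : Set (Fin (n 0) → ℝ)) (hCcpt : IsCompact C) :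
    ∃ b : ∀ i : ℕ, Fin (n (i + 1)) → ℝ, ∀ c ∈ C,
      (W ℓ).mulVec (reluLayers n W b ℓ c) + b ℓ = linLayers n W (ℓ + 1) c := by
  choose s hs using fun i => hCcpt.exists_add_nonneg (continuous_linLayers W i)
  let t : ∀ i, Fin (n i) → ℝ := fun i => if i = 0 ∨ ℓ < i then 0 else s i
  refine ⟨shiftBias W t, fun c hc => mulVec_reluLayers_add_shiftBias W (by simp [t])
    (by simp [t]) fun k hk => ?_⟩
  simpa [t, not_le.2 hk] using hs (k + 1) c hc

/-- a purely linear network (no activations, no biases) can be realized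
exactly on any nonempty compact set by a ReLU network with the same weight matrices and
suitably chosen biases: there exist biases `b_1, …, b_{ℓ+1}` such that
`W_{ℓ+1} (L_ℓ ∘ ⋯ ∘ L_1)(c) + b_{ℓ+1} = W_{ℓ+1} W_ℓ ⋯ W_1 c` for all `c ∈ C`. -/
theorem relu_network_realizes_linear_on_compact (ℓ : ℕ) (n : ℕ → ℕ)
    (hn : ∀ i, 0 < n i) (W : ∀ i : ℕ, Matrix (Fin (n (i + 1))) (Fin (n i)) ℝ)
    (C : Set (Fin (n 0) → ℝ)) (hC : C.Nonempty) (hCcpt : IsCompact C) :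
    ∃ b : ∀ i : ℕ, Fin (n (i + 1)) → ℝ, ∀ c ∈ C,
      (W ℓ).mulVec (reluLayers n W b ℓ c) + b ℓ = linLayers n W (ℓ + 1) c :=
  relu_network_realizes_linear_on_compact_general ℓ n W C hCcpt
end
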